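/- arXiv:1906.10031 — 8 statements merged into one kernel-verified Lean document; each statement's English description precedes it below -/
import Mathlib

section
/- Let G be a cograph and let σ : V(G) → S be a surjective proper vertex coloring of G that is an hc-coloring of G. Then the number of colors used satisfies |S| = χ(G), the chromatic number of G. -/
/-! Basic notions: cographs, binary cotrees, hc-colorings, greedy colorings,
recursively minimal (color-minimal) colorings, and counting of hc-colorings. -/

variable {V : Type*}

/-- A cograph is a (finite simple) graph with no induced path on four vertices. -/
def IsCograph (G : SimpleGraph V) : Prop :=
  ¬ ∃ a b c d : V, a ≠ b ∧ a ≠ c ∧ a ≠ d ∧ b ≠ c ∧ b ≠ d ∧ c ≠ d ∧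
      G.Adj a b ∧ G.Adj b c ∧ G.Adj c d ∧ ¬ G.Adj a c ∧ ¬ G.Adj a d ∧ ¬ G.Adj b d

/-- Binary trees whose leaves carry vertices and whose inner nodes carry a label:
`true` = join, `false` = disjoint union. -/
inductive Cotree (V : Type*) where
  | leaf (v : V)
  | node (t : Bool) (l r : Cotree V)

/-- The set of vertices at the leaves of a cotree. -/
def Cotree.leaves : Cotree V → Set V
  | .leaf v => {v}
  | .node _ l r => Cotree.leaves l ∪ Cotree.leaves r

/-- The structural condition for a cotree to describe (an induced subgraph of) `G`:
at every inner node, the leaf sets of the two children are disjoint, and vertices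
below different children are adjacent iff the node is a join (`true`) node. -/
def Cotree.Represents (G : SimpleGraph V) : Cotree V → Prop
  | .leaf _ => True
  | .node b l r => Cotree.Represents G l ∧ Cotree.Represents G r ∧
      Disjoint (Cotree.leaves l) (Cotree.leaves r) ∧
      ∀ x ∈ Cotree.leaves l, ∀ y ∈ Cotree.leaves r, (G.Adj x y ↔ b = true)

/-- `T` is a binary cotree of the graph `G`: it records a recursive construction of
`G` by disjoint unions and joins, and its leaves are exactly the vertices of `G`. -/
def Cotree.IsCotreeOf (T : Cotree V) (G : SimpleGraph V) : Prop :=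
  Cotree.Represents G T ∧ Cotree.leaves T = Set.univ

/-- `σ` is an hc-coloring with respect to the cotree `T`: at every join node the color
sets of the two children are disjoint, and at every union node one of the two color
sets contains the other. -/
def IsHCWrt {α : Type*} (σ : V → α) : Cotree V → Prop
  | .leaf _ => True
  | .node b l r => IsHCWrt σ l ∧ IsHCWrt σ r ∧
      (b = true → Disjoint (σ '' Cotree.leaves l) (σ '' Cotree.leaves r)) ∧
      (b = false → σ '' Cotree.leaves l ⊆ σ '' Cotree.leaves r ∨
                   σ '' Cotree.leaves r ⊆ σ '' Cotree.leaves l)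

/-- A greedy coloring: a proper coloring with colors `1, 2, …` such that every vertex
`v` has, for each color `c` with `1 ≤ c < σ v`, a neighbor colored `c`. -/
def IsGreedyColoring (G : SimpleGraph V) (σ : V → ℕ) : Prop :=
  (∀ x y, G.Adj x y → σ x ≠ σ y) ∧ (∀ v, 1 ≤ σ v) ∧
    ∀ v c, 1 ≤ c → c < σ v → ∃ u, G.Adj v u ∧ σ u = c

/-- The coloring `σ` uses exactly `χ` many colors on the subgraph of `G` induced by `L`. -/
def UsesChiColors {α : Type*} (G : SimpleGraph V) (σ : V → α) (L : Set V) : Prop :=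
  (((σ '' L).ncard : ℕ∞) = (G.induce L).chromaticNumber)

/-- `σ` is recursively minimal with respect to the cotree `T`: every subgraph of `G`
arising in the recursive construction recorded by `T` is colored with the minimum
possible number of colors. -/
def IsRecMinWrt {α : Type*} (G : SimpleGraph V) (σ : V → α) : Cotree V → Prop
  | .leaf v => UsesChiColors G σ {v}
  | .node _ l r => UsesChiColors G σ (Cotree.leaves l ∪ Cotree.leaves r) ∧
      IsRecMinWrt G σ l ∧ IsRecMinWrt G σ r

/-- `σ` is a recursively minimal coloring of `G`, i.e. `(G, σ)` is color-minimal. -/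
def IsRecMinColoring {α : Type*} (G : SimpleGraph V) (σ : V → α) : Prop :=
  ∃ T : Cotree V, Cotree.IsCotreeOf T G ∧ IsRecMinWrt G σ T

/-- `s` occurs as a subtree of `T` (rooted at some vertex of `T`). -/
def Cotree.IsSubtreeOf : Cotree V → Cotree V → Prop
  | s, .leaf v => s = .leaf v
  | s, .node b l r => s = .node b l r ∨ Cotree.IsSubtreeOf s l ∨ Cotree.IsSubtreeOf s r

/-- hc-coloring condition for a coloring defined only on the vertex set `L`. -/
def IsHCOn {α : Type*} {L : Set V} (f : L → α) : Cotree V → Prop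
  | .leaf _ => True
  | .node b l r => IsHCOn f l ∧ IsHCOn f r ∧
      (b = true → Disjoint (f '' (Subtype.val ⁻¹' Cotree.leaves l))
                           (f '' (Subtype.val ⁻¹' Cotree.leaves r))) ∧
      (b = false → f '' (Subtype.val ⁻¹' Cotree.leaves l) ⊆
                     f '' (Subtype.val ⁻¹' Cotree.leaves r) ∨
                   f '' (Subtype.val ⁻¹' Cotree.leaves r) ⊆
                     f '' (Subtype.val ⁻¹' Cotree.leaves l))

/-- The number of hc-colorings of the subgraph of `G` induced by the leaves of `T`,
with respect to `T`, using colors from the fixed color set `Fin k`. -/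
noncomputable def hcCount (G : SimpleGraph V) (T : Cotree V) (k : ℕ) : ℕ :=
  Set.ncard {f : ↥(Cotree.leaves T) → Fin k |
    (∀ x y : ↥(Cotree.leaves T), G.Adj ↑x ↑y → f x ≠ f y) ∧ IsHCOn f T}

/-- The number of hc-colorings of `G` (with respect to some binary cotree of `G`),
using colors from the fixed color set `Fin k`. -/
noncomputable def hcColoringCount {W : Type*} (G : SimpleGraph W) (k : ℕ) : ℕ :=
  Set.ncard {σ : W → Fin k | (∀ x y, G.Adj x y → σ x ≠ σ y) ∧
    ∃ T : Cotree W, Cotree.IsCotreeOf T G ∧ IsHCWrt σ T}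

/-! Compare `σ` with an arbitrary proper coloring `τ` along the cotree: at a union node `σ`
uses only the colors of one child, and at a join node both `σ` and `τ` use disjoint color sets
on the two children, so by induction `σ` never uses more colors than `τ` on the leaves below a
node. Taking for `τ` an optimal coloring gives `|S| ≤ χ(G)`, and `σ` itself gives
`χ(G) ≤ |S|`. -/

instance Cotree.finite_leaves (T : Cotree V) : Finite T.leaves := by
  induction T with
  | leaf v => exact Set.finite_singleton v |>.to_subtype
  | node _ l r _ _ => exact Finite.Set.finite_union l.leaves r.leaves

open Set in
theorem Cotree.Represents.ncard_image_le_of_isHCWrt {α β : Type*} {G : SimpleGraph V}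
    {σ : V → α} {τ : V → β} (hτ : ∀ x y, G.Adj x y → τ x ≠ τ y) :
    ∀ {T : Cotree V}, T.Represents G → IsHCWrt σ T →
      (σ '' T.leaves).ncard ≤ (τ '' T.leaves).ncard
  | .leaf v, _, _ => by simp [Cotree.leaves]
  | .node b l r, ⟨hl, hr, _, hadj⟩, ⟨hσl, hσr, hjoin, hunion⟩ => by
    have ihl := hl.ncard_image_le_of_isHCWrt hτ hσl
    have ihr := hr.ncard_image_le_of_isHCWrt hτ hσr
    simp only [Cotree.leaves, image_union]
    cases b with
    | false =>
      rcases hunion rfl with h | h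
      · rw [union_eq_right.mpr h]
        exact ihr.trans (ncard_le_ncard subset_union_right)
      · rw [union_eq_left.mpr h]
        exact ihl.trans (ncard_le_ncard subset_union_left)
    | true =>
      have hτ_disj : Disjoint (τ '' l.leaves) (τ '' r.leaves) :=
        disjoint_image_image fun x hx y hy => hτ x y ((hadj x hx y hy).mpr rfl)
      rw [ncard_union_eq (hjoin rfl), ncard_union_eq hτ_disj]
      omega

theorem hc_coloring_card_eq_chromaticNumber_general {V S : Type*}
    (G : SimpleGraph V)
    (σ : V → S) (hsurj : Function.Surjective σ)
    (hproper : ∀ x y, G.Adj x y → σ x ≠ σ y)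
    (hhc : ∃ T : Cotree V, Cotree.IsCotreeOf T G ∧ IsHCWrt σ T) :
    (Nat.card S : ℕ∞) = G.chromaticNumber := by
  obtain ⟨T, ⟨hT, hleaves⟩, hσT⟩ := hhc
  have : Finite V := Set.finite_univ_iff.mp (hleaves ▸ Set.toFinite T.leaves)
  have : Finite S := Finite.of_surjective σ hsurj
  have hσ_card : (σ '' T.leaves).ncard = Nat.card S := by
    rw [hleaves, Set.image_univ, hsurj.range_eq, Set.ncard_univ]
  refine le_antisymm ?_ ?_
  · refine SimpleGraph.le_chromaticNumber_iff_coloring.mpr fun m C => ?_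
    calc Nat.card S = (σ '' T.leaves).ncard := hσ_card.symm
      _ ≤ (C '' T.leaves).ncard := hT.ncard_image_le_of_isHCWrt (fun _ _ h => C.valid h) hσT
      _ ≤ Nat.card (Fin m) := Set.ncard_le_card _
      _ = m := Nat.card_fin m
  · have := Fintype.ofFinite S
    simpa using (SimpleGraph.Coloring.mk σ (hproper _ _)).colorable.chromaticNumber_le

/-- If `σ : V → S` is a surjective proper coloring of a cograph `G`
that is an hc-coloring of `G` (w.r.t. some binary cotree of `G`), then `|S| = χ(G)`. -/
theorem hc_coloring_card_eq_chromaticNumber {V S : Type*} [Fintype V] [Nonempty V]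
    (G : SimpleGraph V) (hG : IsCograph G)
    (σ : V → S) (hsurj : Function.Surjective σ)
    (hproper : ∀ x y, G.Adj x y → σ x ≠ σ y)
    (hhc : ∃ T : Cotree V, Cotree.IsCotreeOf T G ∧ IsHCWrt σ T) :
    (Nat.card S : ℕ∞) = G.chromaticNumber :=
  hc_coloring_card_eq_chromaticNumber_general G σ hsurj hproper hhc
end

section
/- Let σ be a greedy coloring of a cograph G and let G1 = (V1,E1) be a connected component of G. Then the set of colors used on G1 is exactly σ(V1) = {1, 2, …, χ(G1)}. -/
/-! Basic notions: cographs, binary cotrees, hc-colorings, greedy colorings,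
recursively minimal (color-minimal) colorings, and counting of hc-colorings. -/

variable {V : Type*}

/-!
In a cograph, every vertex `v` of a greedy coloring `σ` lies in a clique carrying all the
colors `1, …, σ v`, so no color exceeds `χ`. The clique is built downwards one color at a
time: among the vertices of color `i`, take a vertex `y` with the most neighbors in the
current clique. If `y` missed a clique vertex `t`, greediness gives a neighbor `z` of `t`
of color `i`; every clique neighbor `l` of `y` is adjacent to `z`, since otherwise
`y - l - t - z` is an induced `P₄`, so `z` has strictly more clique neighbors than `y`.
Conversely the colors of a greedy coloring form an initial segment `{1, …, m}`, and
`χ ≤ m`. A connected component is an induced subgraph, hence again a cograph, and `σ`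
restricts to a greedy coloring of it.
-/

open SimpleGraph

variable {G : SimpleGraph V} {σ : V → ℕ}

theorem IsCograph.induce (hG : IsCograph G) (s : Set V) : IsCograph (G.induce s) := by
  rintro ⟨a, b, c, d, hab, hac, had, hbc, hbd, hcd, h⟩
  exact hG ⟨a, b, c, d, Subtype.coe_ne_coe.2 hab, Subtype.coe_ne_coe.2 hac,
    Subtype.coe_ne_coe.2 had, Subtype.coe_ne_coe.2 hbc, Subtype.coe_ne_coe.2 hbd,
    Subtype.coe_ne_coe.2 hcd, h⟩

theorem IsCograph.adj_of_adj_of_adj_of_adj (hG : IsCograph G) {a b c d : V}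
    (hab : G.Adj a b) (hbc : G.Adj b c) (hcd : G.Adj c d)
    (hac : ¬ G.Adj a c) (had : ¬ G.Adj a d) : G.Adj b d := by
  by_contra hbd
  refine hG ⟨a, b, c, d, hab.ne, ?_, ?_, hbc.ne, ?_, hcd.ne, hab, hbc, hcd, hac, had, hbd⟩
  · rintro rfl
    exact had hcd
  · rintro rfl
    exact hac hcd.symm
  · rintro rfl
    exact had hab

namespace IsGreedyColoring

theorem Icc_subset_range (hσ : IsGreedyColoring G σ) {c : ℕ} (hc : c ∈ Set.range σ) :
    Set.Icc 1 c ⊆ Set.range σ := by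
  obtain ⟨v, rfl⟩ := hc
  rintro c ⟨hc1, hcv⟩
  rcases hcv.eq_or_lt with rfl | hlt
  · exact ⟨v, rfl⟩
  · obtain ⟨u, -, hu⟩ := hσ.2.2 v c hc1 hlt
    exact ⟨u, hu⟩

theorem colorable (hσ : IsGreedyColoring G σ) {n : ℕ} (hn : ∀ v, σ v ≤ n) :
    G.Colorable n := by
  obtain ⟨hproper, hpos, -⟩ := hσ
  refine ⟨Coloring.mk (fun v => (⟨σ v - 1, ?_⟩ : Fin n))
    fun {u v} huv hcol => hproper u v huv ?_⟩
  · have := hpos v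
    have := hn v
    omega
  · have := hpos u
    have := hpos v
    rw [Fin.mk.injEq] at hcol
    omega

theorem induce_supp (hσ : IsGreedyColoring G σ) (C : G.ConnectedComponent) :
    IsGreedyColoring (G.induce C.supp) (fun v => σ v) := by
  refine ⟨fun u v huv => hσ.1 u v huv, fun v => hσ.2.1 v, fun v c hc1 hcv => ?_⟩
  obtain ⟨u, hvu, hu⟩ := hσ.2.2 v c hc1 hcv
  exact ⟨⟨u, C.mem_supp_of_adj_mem_supp v.2 hvu⟩, hvu, hu⟩

theorem exists_forall_adj_of_isClique (hG : IsCograph G) (hσ : IsGreedyColoring G σ)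
    {i : ℕ} (hi : 1 ≤ i) {s : Finset V} (hs : s.Nonempty) (hclique : G.IsClique (s : Set V))
    (hlt : ∀ t ∈ s, i < σ t) : ∃ y, σ y = i ∧ ∀ t ∈ s, G.Adj y t := by
  classical
  obtain ⟨hproper, -, hgreedy⟩ := hσ
  let degIn : V → ℕ := fun y => (s.filter (G.Adj y)).card
  have hbdd : BddAbove (degIn '' {y | σ y = i}) := by
    refine ⟨s.card, ?_⟩
    rintro _ ⟨y, -, rfl⟩
    exact Finset.card_filter_le _ _
  have hne : (degIn '' {y | σ y = i}).Nonempty := by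
    obtain ⟨t, ht⟩ := hs
    obtain ⟨u, -, hu⟩ := hgreedy t i hi (hlt t ht)
    exact ⟨degIn u, u, hu, rfl⟩
  obtain ⟨y, hyi, hy⟩ := Nat.sSup_mem hne hbdd
  refine ⟨y, hyi, ?_⟩
  by_contra! ⟨t, hts, hyt⟩
  obtain ⟨z, htz, hzi⟩ := hgreedy t i hi (hlt t hts)
  have hyz : ¬ G.Adj y z := fun h => hproper y z h (hyi.trans hzi.symm)
  have hsub : s.filter (G.Adj y) ⊂ s.filter (G.Adj z) := by
    refine Finset.ssubset_iff_subset_ne.2 ⟨fun l hl => ?_, fun h => ?_⟩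
    · obtain ⟨hls, hyl⟩ := Finset.mem_filter.1 hl
      have hlt : G.Adj l t := hclique hls hts fun h => hyt (h ▸ hyl)
      exact Finset.mem_filter.2 ⟨hls, (hG.adj_of_adj_of_adj_of_adj hyl hlt htz hyt hyz).symm⟩
    · exact hyt (Finset.mem_filter.1 (h ▸ Finset.mem_filter.2 ⟨hts, htz.symm⟩)).2
  have hzy : degIn z ≤ degIn y := hy ▸ le_csSup hbdd ⟨z, hzi, rfl⟩
  exact hzy.not_gt (Finset.card_lt_card hsub)

theorem exists_isClique_image_eq_Icc (hG : IsCograph G) (hσ : IsGreedyColoring G σ) (v : V)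
    {d : ℕ} (hd : d < σ v) :
    ∃ s : Finset V, G.IsClique (s : Set V) ∧ s.image σ = Finset.Icc (σ v - d) (σ v) := by
  classical
  induction d with
  | zero => exact ⟨{v}, by simp, by simp⟩
  | succ d ih =>
    obtain ⟨s, hs, himg⟩ := ih (by omega)
    have hlt : ∀ t ∈ s, σ v - (d + 1) < σ t := fun t ht => by
      have := Finset.mem_Icc.1 (himg ▸ Finset.mem_image_of_mem σ ht)
      omega
    have hne : s.Nonempty := Finset.image_nonempty.1 (himg ▸ Finset.nonempty_Icc.2 (by omega))
    obtain ⟨y, hy, hadj⟩ := exists_forall_adj_of_isClique hG hσ (by omega) hne hs hlt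
    refine ⟨insert y s, ?_, ?_⟩
    · rw [Finset.coe_insert]
      exact hs.insert fun t ht _ => hadj t ht
    · rw [Finset.image_insert, himg, hy]
      ext c
      simp only [Finset.mem_insert, Finset.mem_Icc]
      omega

theorem le_chromaticNumber (hG : IsCograph G) (hσ : IsGreedyColoring G σ) (v : V) :
    (σ v : ℕ∞) ≤ G.chromaticNumber := by
  have hv := hσ.2.1 v
  obtain ⟨s, hs, himg⟩ := hσ.exists_isClique_image_eq_Icc hG v (d := σ v - 1) (by omega)
  calc (σ v : ℕ∞) = (s.image σ).card := by rw [himg, Nat.card_Icc]; congr 1; omega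
    _ ≤ s.card := by exact_mod_cast Finset.card_image_le
    _ ≤ G.chromaticNumber := hs.card_le_chromaticNumber

theorem range_eq_Icc_of_isCograph (hG : IsCograph G) (hσ : IsGreedyColoring G σ) {k : ℕ}
    (hk : (k : ℕ∞) = G.chromaticNumber) : Set.range σ = Set.Icc 1 k := by
  have hle : ∀ v, σ v ≤ k := fun v => by exact_mod_cast hk ▸ hσ.le_chromaticNumber hG v
  refine (Set.range_subset_iff.2 fun v => Set.mem_Icc.2 ⟨hσ.2.1 v, hle v⟩).antisymm ?_
  by_cases hkσ : k ∈ Set.range σ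
  · exact hσ.Icc_subset_range hkσ
  · have hcol : G.Colorable (k - 1) :=
      hσ.colorable fun v => Nat.le_sub_one_of_lt ((hle v).lt_of_ne fun h => hkσ ⟨v, h⟩)
    have : k ≤ k - 1 := by exact_mod_cast hk ▸ hcol.chromaticNumber_le
    simp [show k = 0 by omega]

end IsGreedyColoring

theorem greedy_coloring_component_colors_general {V : Type*}
    (G : SimpleGraph V) (hG : IsCograph G)
    (σ : V → ℕ) (hσ : IsGreedyColoring G σ)
    (C : G.ConnectedComponent) (k : ℕ)
    (hk : (k : ℕ∞) = (G.induce C.supp).chromaticNumber) :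
    σ '' C.supp = Set.Icc 1 k := by
  rw [Set.image_eq_range]
  exact (hσ.induce_supp C).range_eq_Icc_of_isCograph (hG.induce C.supp) hk

/-- If `σ` is a greedy coloring of a cograph `G` and `G₁` is a
connected component of `G` with chromatic number `k`, then the set of colors used
on `G₁` is exactly `{1, …, k}`. -/
theorem greedy_coloring_component_colors {V : Type*} [Fintype V]
    (G : SimpleGraph V) (hG : IsCograph G)
    (σ : V → ℕ) (hσ : IsGreedyColoring G σ)
    (C : G.ConnectedComponent) (k : ℕ)
    (hk : (k : ℕ∞) = (G.induce C.supp).chromaticNumber) :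
    σ '' C.supp = Set.Icc 1 k :=
  greedy_coloring_component_colors_general G hG σ hσ C k hk
end

section
/- Let G be a cograph, (T,t) an arbitrary binary cotree for G, and σ a greedy coloring of G. Then σ is an hc-coloring of G with respect to (T,t). -/
/-! Basic notions: cographs, binary cotrees, hc-colorings, greedy colorings,
recursively minimal (color-minimal) colorings, and counting of hc-colorings. -/

variable {V : Type*}

/-!
Call a vertex set a module if every vertex outside it is adjacent to all of it or to none of it.
The leaf set of every subtree of a cotree is a module. At a join node the two color sets are
disjoint because the coloring is proper. At a union node `A ∪ B`, suppose `σ a < σ b` with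
`a ∈ A`, `b ∈ B`. Greedy gives `b` a neighbour `u` of color `σ a`; `u` is not in `A`, and it is
not outside `A ∪ B` either, since then the module property would make it adjacent to `a` as well.
So `σ a` is used on `B`, and the two color sets are nested.
-/

namespace SimpleGraph

variable (G : SimpleGraph V)

def IsModule (S : Set V) : Prop :=
  ∀ u ∉ S, ∀ x ∈ S, ∀ y ∈ S, G.Adj u x → G.Adj u y

lemma isModule_univ : G.IsModule Set.univ :=
  fun _ hu => absurd (Set.mem_univ _) hu

variable {G}

lemma disjoint_image_of_forall_adj {α : Type*} {σ : V → α} {A B : Set V}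
    (hσ : ∀ x y, G.Adj x y → σ x ≠ σ y) (hadj : ∀ x ∈ A, ∀ y ∈ B, G.Adj x y) :
    Disjoint (σ '' A) (σ '' B) := by
  rw [Set.disjoint_left]
  rintro _ ⟨x, hx, rfl⟩ ⟨y, hy, hxy⟩
  exact hσ x y (hadj x hx y hy) hxy.symm

end SimpleGraph

namespace Cotree

variable {G : SimpleGraph V} {b : Bool} {l r : Cotree V}

lemma Represents.isModule_left (hrep : Represents G (.node b l r))
    (hmod : G.IsModule (node b l r).leaves) : G.IsModule l.leaves := by
  intro u hu x hx y hy hux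
  by_cases hur : u ∈ r.leaves
  · exact (hrep.2.2.2 y hy u hur |>.mpr <| (hrep.2.2.2 x hx u hur).mp hux.symm).symm
  · exact hmod u (by simp [leaves, hu, hur]) x (.inl hx) y (.inl hy) hux

lemma Represents.isModule_right (hrep : Represents G (.node b l r))
    (hmod : G.IsModule (node b l r).leaves) : G.IsModule r.leaves := by
  intro u hu x hx y hy hux
  by_cases hul : u ∈ l.leaves
  · exact hrep.2.2.2 u hul y hy |>.mpr <| (hrep.2.2.2 u hul x hx).mp hux
  · exact hmod u (by simp [leaves, hu, hul]) x (.inr hx) y (.inr hy) hux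

end Cotree

namespace IsGreedyColoring

variable {G : SimpleGraph V} {σ : V → ℕ} {A B : Set V}

lemma mem_image_of_lt (hσ : IsGreedyColoring G σ) (hmod : G.IsModule (A ∪ B))
    (hnadj : ∀ x ∈ A, ∀ y ∈ B, ¬ G.Adj x y) {a b : V} (ha : a ∈ A) (hb : b ∈ B)
    (hlt : σ a < σ b) : σ a ∈ σ '' B := by
  obtain ⟨u, hbu, hu⟩ := hσ.2.2 b (σ a) (hσ.2.1 a) hlt
  refine ⟨u, ?_, hu⟩
  by_contra huB
  have huA : u ∉ A := fun h => hnadj u h b hb hbu.symm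
  have hua : G.Adj u a := hmod u (by simp [huA, huB]) b (.inr hb) a (.inl ha) hbu.symm
  exact hσ.1 u a hua hu

lemma image_subset_or_image_subset (hσ : IsGreedyColoring G σ) (hmod : G.IsModule (A ∪ B))
    (hnadj : ∀ x ∈ A, ∀ y ∈ B, ¬ G.Adj x y) : σ '' A ⊆ σ '' B ∨ σ '' B ⊆ σ '' A := by
  have hmod' : G.IsModule (B ∪ A) := Set.union_comm A B ▸ hmod
  have hnadj' : ∀ y ∈ B, ∀ x ∈ A, ¬ G.Adj y x := fun y hy x hx h => hnadj x hx y hy h.symm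
  by_contra! ⟨hAB, hBA⟩
  obtain ⟨_, ⟨a, ha, rfl⟩, haB⟩ := Set.not_subset.mp hAB
  obtain ⟨_, ⟨b, hb, rfl⟩, hbA⟩ := Set.not_subset.mp hBA
  rcases lt_trichotomy (σ a) (σ b) with h | h | h
  · exact haB (hσ.mem_image_of_lt hmod hnadj ha hb h)
  · exact haB ⟨b, hb, h.symm⟩
  · exact hbA (hσ.mem_image_of_lt hmod' hnadj' hb ha h)

lemma isHCWrt_of_isModule (hσ : IsGreedyColoring G σ) :
    ∀ T : Cotree V, T.Represents G → G.IsModule T.leaves → IsHCWrt σ T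
  | .leaf _, _, _ => trivial
  | .node b l r, hrep, hmod => by
    have hadj := hrep.2.2.2
    refine ⟨isHCWrt_of_isModule hσ l hrep.1 (hrep.isModule_left hmod),
      isHCWrt_of_isModule hσ r hrep.2.1 (hrep.isModule_right hmod), ?_, ?_⟩
    · rintro rfl
      exact SimpleGraph.disjoint_image_of_forall_adj hσ.1 fun x hx y hy => (hadj x hx y hy).mpr rfl
    · rintro rfl
      exact hσ.image_subset_or_image_subset hmod fun x hx y hy h => by
        simpa using (hadj x hx y hy).mp h

end IsGreedyColoring

theorem greedy_coloring_isHCWrt_general {V : Type*}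
    (G : SimpleGraph V)
    (T : Cotree V) (hT : Cotree.IsCotreeOf T G)
    (σ : V → ℕ) (hσ : IsGreedyColoring G σ) :
    IsHCWrt σ T :=
  hσ.isHCWrt_of_isModule T hT.1 (hT.2 ▸ G.isModule_univ)

/-- Let `G` be a cograph, `(T,t)` an arbitrary binary cotree for `G`,
and `σ` a greedy coloring of `G`. Then `σ` is an hc-coloring of `G` w.r.t. `(T,t)`. -/
theorem greedy_coloring_isHCWrt {V : Type*} [Fintype V]
    (G : SimpleGraph V) (hG : IsCograph G)
    (T : Cotree V) (hT : Cotree.IsCotreeOf T G)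
    (σ : V → ℕ) (hσ : IsGreedyColoring G σ) :
    IsHCWrt σ T :=
  greedy_coloring_isHCWrt_general G T hT σ hσ
end

section
/- Every cograph G admits an hc-coloring, i.e., there exists a proper vertex coloring σ of G and a binary cotree (T,t) of G such that σ is an hc-coloring of G with respect to (T,t). -/
/-! Basic notions: cographs, binary cotrees, hc-colorings, greedy colorings,
recursively minimal (color-minimal) colorings, and counting of hc-colorings. -/

variable {V : Type*}

namespace HCAux

variable {V : Type*}

/-- Reachability within a finite vertex set `S`. -/
def Conn (G : SimpleGraph V) (S : Finset V) : V → V → Prop :=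
  Relation.ReflTransGen (fun a b => a ∈ S ∧ b ∈ S ∧ G.Adj a b)

lemma conn_refl {G : SimpleGraph V} {S : Finset V} (x : V) : Conn G S x x :=
  Relation.ReflTransGen.refl

lemma conn_symm {G : SimpleGraph V} {S : Finset V} : Symmetric (Conn G S) :=
  by
    haveI : Std.Symm (fun a b : V => a ∈ S ∧ b ∈ S ∧ G.Adj a b) :=
      ⟨fun _ _ ⟨ha, hb, hab⟩ => ⟨hb, ha, hab.symm⟩⟩
    exact fun _ _ h => Std.Symm.symm (r := Relation.ReflTransGen _) _ _ h

lemma conn_trans {G : SimpleGraph V} {S : Finset V} {x y z : V}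
    (h1 : Conn G S x y) (h2 : Conn G S y z) : Conn G S x z :=
  Relation.ReflTransGen.trans h1 h2

lemma conn_mem_right {G : SimpleGraph V} {S : Finset V} {x y : V}
    (hx : x ∈ S) (h : Conn G S x y) : y ∈ S := by
  rcases Relation.ReflTransGen.cases_tail h with rfl | ⟨z, _, ⟨_, hy, _⟩⟩
  · exact hx
  · exact hy

lemma isCograph_compl {G : SimpleGraph V} (hG : IsCograph G) : IsCograph Gᶜ := by
  rintro ⟨a, b, c, d, hab, hac, had, hbc, hbd, hcd, e1, e2, e3, n1, n2, n3⟩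
  rw [SimpleGraph.compl_adj] at e1 e2 e3
  have gac : G.Adj a c := by
    by_contra h; exact n1 ⟨hac, h⟩
  have gad : G.Adj a d := by
    by_contra h; exact n2 ⟨had, h⟩
  have gbd : G.Adj b d := by
    by_contra h; exact n3 ⟨hbd, h⟩
  exact hG ⟨c, a, d, b, hac.symm, hcd, hbc.symm, had, hab, hbd.symm,
    gac.symm, gad, gbd.symm, e3.2, fun h => e2.2 h.symm, e1.2⟩

/-- Core step: adding a vertex `v` to a disconnected set `S'` cannot make it both
connected and co-connected, for a cograph. -/
lemma core' (G : SimpleGraph V) [DecidableEq V] (hG : IsCograph G) (S' : Finset V) (v : V)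
    (hv : v ∉ S') {w1 w2 : V} (hw1 : w1 ∈ S') (hw2 : w2 ∈ S')
    (hsep : ¬ Conn G S' w1 w2)
    (hc : ∀ x ∈ insert v S', ∀ y ∈ insert v S', Conn G (insert v S') x y)
    (hcc : ∀ x ∈ insert v S', ∀ y ∈ insert v S', Conn Gᶜ (insert v S') x y) : False := by
  -- closure: a class with no v-neighbor absorbs all S-reachability
  have closure : ∀ w ∈ S', (∀ a, Conn G S' w a → ¬ G.Adj v a) →
      ∀ x y, Conn G (insert v S') x y → Conn G S' w x → Conn G S' w y := by
    intro w hw hno x y h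
    induction h with
    | refl => exact id
    | @tail p q _ h2 ih =>
      intro hwx
      obtain ⟨hb, hcmem, hadj⟩ := h2
      have hwb := ih hwx
      have hbS' : p ∈ S' := conn_mem_right hw hwb
      have hq : q ∈ S' := by
        rcases Finset.mem_insert.mp hcmem with rfl | h
        · exact absurd hadj.symm (hno _ hwb)
        · exact h
      exact hwb.tail ⟨hbS', hq, hadj⟩
  -- every vertex of S' has a v-neighbor in its connectivity class
  have key : ∀ w ∈ S', ∃ a, Conn G S' w a ∧ G.Adj v a := by
    intro w hw
    by_contra hno
    push_neg at hno
    have hw' : ∃ w' ∈ S', ¬ Conn G S' w w' := by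
      by_contra hall; push_neg at hall
      exact hsep (conn_trans (conn_symm (hall w1 hw1)) (hall w2 hw2))
    obtain ⟨w', hw'S, hww'⟩ := hw'
    exact hww' (closure w hw hno w w'
      (hc w (Finset.mem_insert_of_mem hw) w' (Finset.mem_insert_of_mem hw'S))
      (conn_refl w))
  -- flipping pair along a path from a v-neighbor to a v-non-neighbor
  have flip : ∀ u, ¬ G.Adj v u → ∀ a, Conn G S' a u → G.Adj v a →
      ∃ x y, x ∈ S' ∧ y ∈ S' ∧ G.Adj x y ∧ G.Adj v x ∧ ¬ G.Adj v y ∧ Conn G S' a x := by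
    intro u hu a hconn
    induction hconn using Relation.ReflTransGen.head_induction_on with
    | refl => intro hva; exact absurd hva hu
    | @head p q h1 _ ih =>
      intro hva
      obtain ⟨haS, hzS, hadj⟩ := h1
      by_cases hvz : G.Adj v q
      · obtain ⟨x, y, hx, hy, hxy, hvx, hvy, hcx⟩ := ih hvz
        exact ⟨x, y, hx, hy, hxy, hvx, hvy, Relation.ReflTransGen.head ⟨haS, hzS, hadj⟩ hcx⟩
      · exact ⟨p, q, haS, hzS, hadj, hva, hvz, conn_refl _⟩
  -- hence v is adjacent to all of S'
  have hall : ∀ u ∈ S', G.Adj v u := by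
    intro u huS
    by_contra hvu
    obtain ⟨a, hconn_a, hva⟩ := key u huS
    obtain ⟨x, y, hx, hy, hxy, hvx, hvy, hax⟩ := flip u hvu a (conn_symm hconn_a) hva
    obtain ⟨a1, h1c, h1adj⟩ := key w1 hw1
    obtain ⟨a2, h2c, h2adj⟩ := key w2 hw2
    have hone : ¬ Conn G S' x a1 ∨ ¬ Conn G S' x a2 := by
      by_contra hb; push_neg at hb
      exact hsep (conn_trans (conn_trans h1c (conn_symm hb.1)) (conn_trans hb.2 (conn_symm h2c)))
    obtain ⟨b', hvb', hb'S, hxb'⟩ : ∃ b', G.Adj v b' ∧ b' ∈ S' ∧ ¬ Conn G S' x b' := by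
      rcases hone with h | h
      · exact ⟨a1, h1adj, conn_mem_right hw1 h1c, h⟩
      · exact ⟨a2, h2adj, conn_mem_right hw2 h2c, h⟩
    have hconnxy : Conn G S' x y := Relation.ReflTransGen.single ⟨hx, hy, hxy⟩
    have hyv : y ≠ v := fun h => hv (h ▸ hy)
    have hxv : x ≠ v := fun h => hv (h ▸ hx)
    have hvb'ne : v ≠ b' := fun h => hv (h ▸ hb'S)
    have hyb' : y ≠ b' := fun h => hxb' (h ▸ hconnxy)
    have hxb'ne : x ≠ b' := fun h => hxb' (h ▸ conn_refl x)
    have nyb' : ¬ G.Adj y b' := fun h =>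
      hxb' (conn_trans hconnxy (Relation.ReflTransGen.single ⟨hy, hb'S, h⟩))
    have nxb' : ¬ G.Adj x b' := fun h =>
      hxb' (Relation.ReflTransGen.single ⟨hx, hb'S, h⟩)
    exact hG ⟨y, x, v, b', hxy.ne', hyv, hyb', hxv, hxb'ne, hvb'ne,
      hxy.symm, hvx.symm, hvb', fun h => hvy h.symm, nyb', nxb'⟩
  -- contradiction with co-connectivity: v is co-isolated
  have := hcc v (Finset.mem_insert_self _ _) w1 (Finset.mem_insert_of_mem hw1)
  rcases Relation.ReflTransGen.cases_head this with heq | ⟨z, ⟨_, hzS, hadj⟩, _⟩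
  · exact hv (heq ▸ hw1)
  · rw [SimpleGraph.compl_adj] at hadj
    rcases Finset.mem_insert.mp hzS with rfl | hz
    · exact hadj.1 rfl
    · exact hadj.2 (hall z hz)

/-- No cograph induces a subgraph on ≥ 2 vertices that is both connected and
co-connected. -/
lemma core [DecidableEq V] (S : Finset V) : ∀ (G : SimpleGraph V), IsCograph G → 2 ≤ S.card →
    (∀ x ∈ S, ∀ y ∈ S, Conn G S x y) → (∀ x ∈ S, ∀ y ∈ S, Conn Gᶜ S x y) → False := by
  induction S using Finset.strongInduction with
  | _ S IH =>
    intro G hG h2 hc hcc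
    obtain ⟨v, hvS⟩ : S.Nonempty := Finset.card_pos.mp (by omega)
    set S' := S.erase v with hS'def
    have hv : v ∉ S' := Finset.notMem_erase v S
    have hins : insert v S' = S := Finset.insert_erase hvS
    have hcard : S'.card = S.card - 1 := Finset.card_erase_of_mem hvS
    rcases Nat.lt_or_ge S'.card 2 with hlt | hge
    · -- S = {v, u}
      have h1 : S'.card = 1 := by omega
      obtain ⟨u, hu⟩ := Finset.card_eq_one.mp h1
      have huS' : u ∈ S' := hu ▸ Finset.mem_singleton_self u
      have hvu : v ≠ u := fun h => hv (h ▸ huS')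
      have huS : u ∈ S := Finset.mem_of_mem_erase huS'
      have adj : G.Adj v u := by
        rcases Relation.ReflTransGen.cases_head (hc v hvS u huS) with heq | ⟨z, ⟨_, hz, ha⟩, _⟩
        · exact absurd heq hvu
        · have hzv : z ≠ v := fun h => (h ▸ ha).ne rfl
          have : z ∈ S' := by
            rw [← hins] at hz
            rcases Finset.mem_insert.mp hz with rfl | h
            · exact absurd rfl hzv
            · exact h
          rw [hu, Finset.mem_singleton] at this
          exact this ▸ ha
      have nadj : Gᶜ.Adj v u := by
        rcases Relation.ReflTransGen.cases_head (hcc v hvS u huS) with heq | ⟨z, ⟨_, hz, ha⟩, _⟩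
        · exact absurd heq hvu
        · have hzv : z ≠ v := fun h => (h ▸ ha).ne rfl
          have : z ∈ S' := by
            rw [← hins] at hz
            rcases Finset.mem_insert.mp hz with rfl | h
            · exact absurd rfl hzv
            · exact h
          rw [hu, Finset.mem_singleton] at this
          exact this ▸ ha
      exact nadj.2 adj
    · -- use IH on S'
      have hsub : S' ⊂ S := Finset.erase_ssubset hvS
      have := IH S' hsub
      have hnot : ¬ ((∀ x ∈ S', ∀ y ∈ S', Conn G S' x y) ∧
          (∀ x ∈ S', ∀ y ∈ S', Conn Gᶜ S' x y)) := by
        rintro ⟨h1', h2'⟩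
        exact IH S' hsub G hG hge h1' h2'
      rw [not_and_or] at hnot
      rw [← hins] at hc hcc
      rcases hnot with h | h
      · push_neg at h
        obtain ⟨w1, hw1, w2, hw2, hsep⟩ := h
        exact core' G hG S' v hv hw1 hw2 hsep hc hcc
      · push_neg at h
        obtain ⟨w1, hw1, w2, hw2, hsep⟩ := h
        exact core' Gᶜ (isCograph_compl hG) S' v hv hw1 hw2 hsep hcc
          (by rw [compl_compl]; exact hc)

/-- From non-connectivity, a separation into two nonempty parts with no edges across. -/
lemma sep [DecidableEq V] (G : SimpleGraph V) (S : Finset V)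
    (h : ¬ ∀ x ∈ S, ∀ y ∈ S, Conn G S x y) :
    ∃ A B : Finset V, A.Nonempty ∧ B.Nonempty ∧ Disjoint A B ∧ A ∪ B = S ∧
      ∀ x ∈ A, ∀ y ∈ B, ¬ G.Adj x y := by
  classical
  push_neg at h
  obtain ⟨x0, hx0, y0, hy0, hxy⟩ := h
  refine ⟨S.filter (fun z => Conn G S x0 z), S.filter (fun z => ¬ Conn G S x0 z),
    ⟨x0, ?_⟩, ⟨y0, ?_⟩, ?_, Finset.filter_union_filter_not_eq _ S, ?_⟩
  · exact Finset.mem_filter.mpr ⟨hx0, conn_refl x0⟩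
  · exact Finset.mem_filter.mpr ⟨hy0, hxy⟩
  · exact Finset.disjoint_filter_filter_not S S _
  · intro x hx y hy hadj
    rw [Finset.mem_filter] at hx hy
    exact hy.2 (hx.2.tail ⟨hx.1, hy.1, hadj⟩)

/-- Every subset of ≥ 2 vertices of a cograph splits into two nonempty parts with
uniform adjacency across. -/
lemma split [DecidableEq V] (G : SimpleGraph V) (hG : IsCograph G) (S : Finset V)
    (h2 : 2 ≤ S.card) :
    ∃ A B : Finset V, A.Nonempty ∧ B.Nonempty ∧ Disjoint A B ∧ A ∪ B = S ∧
      ∃ b : Bool, ∀ x ∈ A, ∀ y ∈ B, (G.Adj x y ↔ b = true) := by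
  by_cases hc : ∀ x ∈ S, ∀ y ∈ S, Conn G S x y
  · have hcc : ¬ ∀ x ∈ S, ∀ y ∈ S, Conn Gᶜ S x y := fun hcc => core S G hG h2 hc hcc
    obtain ⟨A, B, hA, hB, hdisj, hun, hcross⟩ := sep Gᶜ S hcc
    refine ⟨A, B, hA, hB, hdisj, hun, true, fun x hx y hy => ?_⟩
    have hne : x ≠ y := fun h => Finset.disjoint_left.mp hdisj hx (h ▸ hy)
    have := hcross x hx y hy
    rw [SimpleGraph.compl_adj] at this
    push_neg at this
    simp [this hne]
  · obtain ⟨A, B, hA, hB, hdisj, hun, hcross⟩ := sep G S hc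
    refine ⟨A, B, hA, hB, hdisj, hun, false, fun x hx y hy => ?_⟩
    simp [hcross x hx y hy]

/-- Every nonempty finite vertex set of a cograph carries a cotree representing `G`. -/
lemma exists_cotree [DecidableEq V] (G : SimpleGraph V) (hG : IsCograph G) (S : Finset V) :
    S.Nonempty → ∃ T : Cotree V, Cotree.leaves T = ↑S ∧ Cotree.Represents G T := by
  induction S using Finset.strongInduction with
  | _ S IH =>
    intro hS
    rcases Nat.lt_or_ge S.card 2 with hlt | hge
    · have h1 : S.card = 1 := by
        have := Finset.card_pos.mpr hS; omega
      obtain ⟨v, hv⟩ := Finset.card_eq_one.mp h1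
      exact ⟨Cotree.leaf v, by simp [hv, Cotree.leaves], trivial⟩
    · obtain ⟨A, B, hA, hB, hdisj, hun, b, hcross⟩ := split G hG S hge
      have hAs : A ⊂ S := by
        rw [← hun]
        refine Finset.ssubset_iff_of_subset Finset.subset_union_left |>.mpr ?_
        obtain ⟨y, hy⟩ := hB
        exact ⟨y, Finset.mem_union_right _ hy, fun h => Finset.disjoint_left.mp hdisj h hy⟩
      have hBs : B ⊂ S := by
        rw [← hun]
        refine Finset.ssubset_iff_of_subset Finset.subset_union_right |>.mpr ?_
        obtain ⟨x, hx⟩ := hA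
        exact ⟨x, Finset.mem_union_left _ hx, fun h => Finset.disjoint_left.mp hdisj hx h⟩
      obtain ⟨Tl, hTl, hrl⟩ := IH A hAs hA
      obtain ⟨Tr, hTr, hrr⟩ := IH B hBs hB
      refine ⟨Cotree.node b Tl Tr, ?_, hrl, hrr, ?_, ?_⟩
      · show Cotree.leaves Tl ∪ Cotree.leaves Tr = _
        rw [hTl, hTr, ← hun]; simp
      · rw [hTl, hTr]
        exact_mod_cast Finset.disjoint_coe.mpr hdisj
      · intro x hx y hy
        rw [hTl] at hx; rw [hTr] at hy
        exact hcross x hx y hy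

lemma isHCWrt_congr {α : Type*} {σ σ' : V → α} : ∀ {T : Cotree V},
    (∀ v ∈ Cotree.leaves T, σ v = σ' v) → IsHCWrt σ T → IsHCWrt σ' T := by
  intro T
  induction T with
  | leaf v => intro _ _; trivial
  | node b l r ihl ihr =>
    intro h hw
    obtain ⟨h1, h2, h3, h4⟩ := hw
    have hl : ∀ v ∈ Cotree.leaves l, σ v = σ' v := fun v hv => h v (Or.inl hv)
    have hr : ∀ v ∈ Cotree.leaves r, σ v = σ' v := fun v hv => h v (Or.inr hv)
    have el : σ' '' Cotree.leaves l = σ '' Cotree.leaves l :=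
      (Set.image_congr hl).symm
    have er : σ' '' Cotree.leaves r = σ '' Cotree.leaves r :=
      (Set.image_congr hr).symm
    exact ⟨ihl hl h1, ihr hr h2, fun hb => by rw [el, er]; exact h3 hb,
      fun hb => by rw [el, er]; exact h4 hb⟩

lemma isHCWrt_comp {α β : Type*} (g : α → β) (hg : Function.Injective g) {σ : V → α} :
    ∀ {T : Cotree V}, IsHCWrt σ T → IsHCWrt (fun v => g (σ v)) T := by
  intro T
  induction T with
  | leaf v => intro _; trivial
  | node b l r ihl ihr =>
    rintro ⟨h1, h2, h3, h4⟩
    have el : (fun v => g (σ v)) '' Cotree.leaves l = g '' (σ '' Cotree.leaves l) := by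
      rw [Set.image_image]
    have er : (fun v => g (σ v)) '' Cotree.leaves r = g '' (σ '' Cotree.leaves r) := by
      rw [Set.image_image]
    refine ⟨ihl h1, ihr h2, fun hb => ?_, fun hb => ?_⟩
    · rw [el, er]
      exact (Set.disjoint_image_iff hg).mpr (h3 hb)
    · rw [el, er]
      rcases h4 hb with h | h
      · exact Or.inl (Set.image_mono (f := g) h)
      · exact Or.inr (Set.image_mono (f := g) h)

/-- The greedy/interval hc-coloring on a cotree. -/
lemma exists_coloring (G : SimpleGraph V) : ∀ T : Cotree V, Cotree.Represents G T →
    ∃ (σ : V → ℕ) (k : ℕ), (σ '' Cotree.leaves T = {n | n < k}) ∧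
      (∀ x ∈ Cotree.leaves T, ∀ y ∈ Cotree.leaves T, G.Adj x y → σ x ≠ σ y) ∧
      IsHCWrt σ T := by
  intro T
  induction T with
  | leaf v =>
    intro _
    refine ⟨fun _ => 0, 1, ?_, ?_, trivial⟩
    · ext n; simp only [Cotree.leaves, Set.image_singleton, Set.mem_singleton_iff,
        Set.mem_setOf_eq, Nat.lt_one_iff, eq_comm]
    · intro x hx y hy hadj
      rw [Cotree.leaves, Set.mem_singleton_iff] at hx hy
      exact absurd (hx ▸ hy ▸ hadj) (G.irrefl)
  | node b l r ihl ihr =>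
    rintro ⟨repl, repr, hdisj, hcross⟩
    obtain ⟨σl, kl, himl, hpl, hhl⟩ := ihl repl
    obtain ⟨σr, kr, himr, hpr, hhr⟩ := ihr repr
    classical
    set L := Cotree.leaves l with hLdef
    set R := Cotree.leaves r with hRdef
    cases b with
    | false =>
      set σ : V → ℕ := fun v => if v ∈ L then σl v else σr v with hσdef
      have hσL : ∀ v ∈ L, σ v = σl v := fun v hv => if_pos hv
      have hσR : ∀ v ∈ R, σ v = σr v := fun v hv =>
        if_neg (fun h => Set.disjoint_left.mp hdisj h hv)
      have eL : σ '' L = σl '' L := Set.image_congr hσL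
      have eR : σ '' R = σr '' R := Set.image_congr hσR
      refine ⟨σ, max kl kr, ?_, ?_, ?_⟩
      · show σ '' (L ∪ R) = _
        rw [Set.image_union, eL, eR, himl, himr]
        ext n; simp [lt_max_iff]
      · intro x hx y hy hadj
        rcases hx with hx | hx <;> rcases hy with hy | hy
        · rw [hσL x hx, hσL y hy]; exact hpl x hx y hy hadj
        · exact absurd ((hcross x hx y hy).mp hadj) (by simp)
        · exact absurd ((hcross y hy x hx).mp hadj.symm) (by simp)
        · rw [hσR x hx, hσR y hy]; exact hpr x hx y hy hadj
      · refine ⟨isHCWrt_congr (fun v hv => (hσL v hv).symm) hhl,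
          isHCWrt_congr (fun v hv => (hσR v hv).symm) hhr,
          fun h => by simp at h, fun _ => ?_⟩
        show σ '' L ⊆ σ '' R ∨ σ '' R ⊆ σ '' L
        rw [eL, eR, himl, himr]
        rcases le_total kl kr with h | h
        · exact Or.inl (fun n hn => lt_of_lt_of_le hn h)
        · exact Or.inr (fun n hn => lt_of_lt_of_le hn h)
    | true =>
      set σ : V → ℕ := fun v => if v ∈ L then σl v else σr v + kl with hσdef
      have hσL : ∀ v ∈ L, σ v = σl v := fun v hv => if_pos hv
      have hσR : ∀ v ∈ R, σ v = σr v + kl := fun v hv =>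
        if_neg (fun h => Set.disjoint_left.mp hdisj h hv)
      have eL : σ '' L = σl '' L := Set.image_congr hσL
      have eR : σ '' R = (fun v => σr v + kl) '' R := Set.image_congr hσR
      have eR' : σ '' R = (fun n => n + kl) '' (σr '' R) := by
        rw [eR, Set.image_image]
      have hLlt : ∀ v ∈ L, σ v < kl := by
        intro v hv
        have : σl v ∈ σl '' L := Set.mem_image_of_mem _ hv
        rw [himl] at this
        rw [hσL v hv]; exact this
      have hRge : ∀ v ∈ R, kl ≤ σ v := fun v hv => by rw [hσR v hv]; omega
      refine ⟨σ, kl + kr, ?_, ?_, ?_⟩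
      · show σ '' (L ∪ R) = _
        rw [Set.image_union, eL, eR', himl, himr]
        ext n
        simp only [Set.mem_union, Set.mem_image, Set.mem_setOf_eq]
        constructor
        · rintro (h | ⟨m, hm, rfl⟩) <;> omega
        · intro h
          rcases Nat.lt_or_ge n kl with h' | h'
          · exact Or.inl h'
          · exact Or.inr ⟨n - kl, by omega, by omega⟩
      · intro x hx y hy hadj
        rcases hx with hx | hx <;> rcases hy with hy | hy
        · rw [hσL x hx, hσL y hy]; exact hpl x hx y hy hadj
        · exact Nat.ne_of_lt (lt_of_lt_of_le (hLlt x hx) (hRge y hy))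
        · exact Nat.ne_of_gt (lt_of_lt_of_le (hLlt y hy) (hRge x hx))
        · rw [hσR x hx, hσR y hy]
          exact fun h => hpr x hx y hy hadj (by omega)
      · refine ⟨isHCWrt_congr (fun v hv => (hσL v hv).symm) hhl,
          isHCWrt_congr (fun v hv => (hσR v hv).symm)
            (isHCWrt_comp (fun n => n + kl) (add_left_injective kl) hhr),
          fun _ => ?_, fun h => by simp at h⟩
        show Disjoint (σ '' L) (σ '' R)
        rw [Set.disjoint_left]
        rintro n ⟨x, hx, rfl⟩ ⟨y, hy, he⟩
        have := hLlt x hx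
        have := hRge y hy
        omega

end HCAux

/-- Every cograph admits an hc-coloring: there is a proper coloring
`σ` of `G` and a binary cotree `T` of `G` such that `σ` is an hc-coloring w.r.t. `T`. -/
theorem exists_hc_coloring {V : Type*} [Fintype V] [Nonempty V]
    (G : SimpleGraph V) (hG : IsCograph G) :
    ∃ (σ : V → ℕ) (T : Cotree V),
      (∀ x y, G.Adj x y → σ x ≠ σ y) ∧ Cotree.IsCotreeOf T G ∧ IsHCWrt σ T := by
  classical
  obtain ⟨T, hleaves, hrep⟩ := HCAux.exists_cotree G hG Finset.univ Finset.univ_nonempty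
  obtain ⟨σ, k, _, hprop, hhc⟩ := HCAux.exists_coloring G T hrep
  have hl : Cotree.leaves T = Set.univ := by rw [hleaves]; simp
  exact ⟨σ, T, fun x y h => hprop x (by rw [hl]; trivial) y (by rw [hl]; trivial) h,
    ⟨hrep, hl⟩, hhc⟩
end

section
/- Let G be a cograph. A proper vertex coloring σ of G is recursively minimal if and only if σ is an hc-coloring of G. -/
/-! Basic notions: cographs, binary cotrees, hc-colorings, greedy colorings,
recursively minimal (color-minimal) colorings, and counting of hc-colorings. -/

variable {V : Type*}

section Helpers

open SimpleGraph

lemma colorable_of_proper {W β : Type*} (H : SimpleGraph W) (f : W → β)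
    (hf : ∀ x y, H.Adj x y → f x ≠ f y) (hfin : (Set.range f).Finite) :
    H.Colorable (Set.range f).ncard := by
  classical
  haveI : Fintype ↥(Set.range f) := hfin.fintype
  have c : H.Coloring ↥(Set.range f) :=
    SimpleGraph.Coloring.mk (fun x => ⟨f x, Set.mem_range_self x⟩)
      (fun {a b} hab h => hf a b hab (congrArg Subtype.val h))
  have := c.colorable
  rwa [← Nat.card_coe_set_eq, Nat.card_eq_fintype_card]

lemma chi_le_image {V α : Type*} [Fintype V] (G : SimpleGraph V) (L : Set V)
    (σ : V → α) (hf : ∀ x ∈ L, ∀ y ∈ L, G.Adj x y → σ x ≠ σ y) :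
    (G.induce L).chromaticNumber ≤ ((σ '' L).ncard : ℕ∞) := by
  have h := colorable_of_proper (G.induce L) (fun x => σ ↑x)
    (fun x y hxy => hf x x.2 y y.2 (by simpa using hxy))
    (Set.finite_range _)
  have hr : Set.range (fun x : L => σ ↑x) = σ '' L := by
    rw [← Set.image_univ, ← Set.image_image σ Subtype.val, Set.image_univ,
      Subtype.range_coe]
  rw [hr] at h
  exact_mod_cast h.chromaticNumber_le

lemma chi_mono {V : Type*} (G : SimpleGraph V) {L1 L2 : Set V} (h : L1 ⊆ L2) :
    (G.induce L1).chromaticNumber ≤ (G.induce L2).chromaticNumber :=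
  chromaticNumber_mono_of_hom (induceHomOfLE G h).toHom

lemma chi_ne_top {V : Type*} [Fintype V] (G : SimpleGraph V) (L : Set V) :
    (G.induce L).chromaticNumber ≠ ⊤ := by
  classical
  haveI : Fintype ↥L := (Set.toFinite L).fintype
  exact ne_top_of_le_ne_top (by simp [Set.toFinite L]) (colorable_of_fintype (G.induce L)).chromaticNumber_le

lemma chi_join_ge {V : Type*} [Fintype V] (G : SimpleGraph V) {L1 L2 : Set V}
    (hcross : ∀ x ∈ L1, ∀ y ∈ L2, G.Adj x y) :
    (G.induce L1).chromaticNumber + (G.induce L2).chromaticNumber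
      ≤ (G.induce (L1 ∪ L2)).chromaticNumber := by
  classical
  haveI : Fintype ↥(L1 ∪ L2) := (Set.toFinite _).fintype
  obtain ⟨c⟩ := colorable_chromaticNumber (colorable_of_fintype (G.induce (L1 ∪ L2)))
  set n := ENat.toNat (G.induce (L1 ∪ L2)).chromaticNumber with hn
  have h1 : (G.induce L1).Colorable
      (Set.range (fun x : L1 => c ⟨↑x, Or.inl x.2⟩)).ncard := by
    apply colorable_of_proper _ _ _ (Set.finite_range _)
    intro x y hxy h
    exact c.valid (by simpa using (show G.Adj ↑x ↑y by simpa using hxy)) h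
  have h2 : (G.induce L2).Colorable
      (Set.range (fun x : L2 => c ⟨↑x, Or.inr x.2⟩)).ncard := by
    apply colorable_of_proper _ _ _ (Set.finite_range _)
    intro x y hxy h
    exact c.valid (by simpa using (show G.Adj ↑x ↑y by simpa using hxy)) h
  set A := Set.range (fun x : L1 => c ⟨↑x, Or.inl x.2⟩)
  set B := Set.range (fun x : L2 => c ⟨↑x, Or.inr x.2⟩)
  have hdisj : Disjoint A B := by
    rw [Set.disjoint_left]
    rintro a ⟨x, rfl⟩ ⟨y, hy⟩
    exact c.valid (by simpa using hcross ↑x x.2 ↑y y.2) hy.symm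
  have hcard : A.ncard + B.ncard ≤ n := by
    rw [← Set.ncard_union_eq hdisj (Set.toFinite _) (Set.toFinite _)]
    calc (A ∪ B).ncard ≤ (Set.univ : Set (Fin n)).ncard :=
          Set.ncard_le_ncard (Set.subset_univ _) (Set.toFinite _)
      _ = n := by rw [Set.ncard_univ, Nat.card_eq_fintype_card, Fintype.card_fin]
  calc (G.induce L1).chromaticNumber + (G.induce L2).chromaticNumber
      ≤ (A.ncard : ℕ∞) + (B.ncard : ℕ∞) :=
        add_le_add h1.chromaticNumber_le h2.chromaticNumber_le
    _ ≤ (n : ℕ∞) := by exact_mod_cast Nat.cast_le.mpr hcard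
    _ = (G.induce (L1 ∪ L2)).chromaticNumber := ENat.coe_toNat (chi_ne_top G _)

lemma chi_union_le {V : Type*} [Fintype V] (G : SimpleGraph V) {L1 L2 : Set V}
    (hcross : ∀ x ∈ L1, ∀ y ∈ L2, ¬ G.Adj x y) :
    (G.induce (L1 ∪ L2)).chromaticNumber
      ≤ max (G.induce L1).chromaticNumber (G.induce L2).chromaticNumber := by
  classical
  set m := ENat.toNat (max (G.induce L1).chromaticNumber (G.induce L2).chromaticNumber) with hm
  have hmt : max (G.induce L1).chromaticNumber (G.induce L2).chromaticNumber ≠ ⊤ := by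
    simp [chi_ne_top G L1, chi_ne_top G L2]
  have hc1 : (G.induce L1).Colorable m := by
    rw [← chromaticNumber_le_iff_colorable, hm, ENat.coe_toNat hmt]
    exact le_max_left _ _
  have hc2 : (G.induce L2).Colorable m := by
    rw [← chromaticNumber_le_iff_colorable, hm, ENat.coe_toNat hmt]
    exact le_max_right _ _
  obtain ⟨c1⟩ := hc1
  obtain ⟨c2⟩ := hc2
  have : (G.induce (L1 ∪ L2)).Colorable m := by
    refine ⟨SimpleGraph.Coloring.mk (fun x => if h : ↑x ∈ L1 then c1 ⟨↑x, h⟩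
      else c2 ⟨↑x, x.2.resolve_left h⟩) ?_⟩
    rintro ⟨a, ha⟩ ⟨b, hb⟩ hab
    have hGab : G.Adj a b := by simpa using hab
    by_cases h1 : a ∈ L1 <;> by_cases h2 : b ∈ L1
    · simp only [dif_pos h1, dif_pos h2]
      exact c1.valid (by simpa using hGab)
    · exact absurd hGab (hcross a h1 b (hb.resolve_left h2))
    · exact absurd hGab.symm (hcross b h2 a (ha.resolve_left h1))
    · simp only [dif_neg h1, dif_neg h2]
      exact c2.valid (by simpa using hGab)
  calc (G.induce (L1 ∪ L2)).chromaticNumber ≤ (m : ℕ∞) := this.chromaticNumber_le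
    _ = _ := ENat.coe_toNat hmt

lemma chi_singleton {V : Type*} [Fintype V] (G : SimpleGraph V) (v : V) :
    (G.induce ({v} : Set V)).chromaticNumber = 1 := by
  classical
  haveI : Subsingleton ↥({v} : Set V) :=
    ⟨fun a b => Subtype.ext (a.2.trans b.2.symm)⟩
  haveI : Nonempty ↥({v} : Set V) := ⟨⟨v, rfl⟩⟩
  haveI : Fintype ↥({v} : Set V) := (Set.toFinite _).fintype
  refine le_antisymm (chromaticNumber_le_one_of_subsingleton _) ?_
  rw [ENat.one_le_iff_ne_zero]
  exact (chromaticNumber_pos (colorable_of_fintype _)).ne'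

lemma usesChi_leaves {V α : Type*} {G : SimpleGraph V} {σ : V → α} :
    ∀ {T : Cotree V}, IsRecMinWrt G σ T → UsesChiColors G σ (Cotree.leaves T)
  | .leaf v, h => h
  | .node b l r, h => h.1

lemma recMin_iff_hc_wrt {V α : Type*} [Fintype V] (G : SimpleGraph V) (σ : V → α)
    (hproper : ∀ x y, G.Adj x y → σ x ≠ σ y) :
    ∀ T : Cotree V, Cotree.Represents G T → (IsRecMinWrt G σ T ↔ IsHCWrt σ T) := by
  intro T
  induction T with
  | leaf v =>
    intro _
    constructor
    · intro _; trivial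
    · intro _
      show UsesChiColors G σ {v}
      unfold UsesChiColors
      rw [Set.image_singleton, Set.ncard_singleton, chi_singleton, Nat.cast_one]
  | node b l r ihl ihr =>
    rintro ⟨hrl, hrr, hdisj, hadj⟩
    set Ll := Cotree.leaves l with hLl
    set Lr := Cotree.leaves r with hLr
    set A := σ '' Ll with hA
    set B := σ '' Lr with hB
    have himg : σ '' (Ll ∪ Lr) = A ∪ B := Set.image_union σ Ll Lr
    constructor
    · rintro ⟨hchi, hml, hmr⟩
      refine ⟨(ihl hrl).mp hml, (ihr hrr).mp hmr, ?_, ?_⟩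
      · intro hb
        rw [Set.disjoint_left]
        rintro a ⟨x, hx, rfl⟩ ⟨y, hy, hy2⟩
        exact hproper x y ((hadj x hx y hy).mpr hb) hy2.symm
      · intro hb
        have hcl : ((A.ncard : ℕ∞)) = (G.induce Ll).chromaticNumber := usesChi_leaves hml
        have hcr : ((B.ncard : ℕ∞)) = (G.induce Lr).chromaticNumber := usesChi_leaves hmr
        have hL : (((σ '' (Ll ∪ Lr)).ncard : ℕ∞)) = (G.induce (Ll ∪ Lr)).chromaticNumber := hchi
        rw [himg] at hL
        have hle : (G.induce (Ll ∪ Lr)).chromaticNumber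
            ≤ max (G.induce Ll).chromaticNumber (G.induce Lr).chromaticNumber :=
          chi_union_le G (fun x hx y hy hAd => by
            have := (hadj x hx y hy).mp hAd
            rw [hb] at this
            exact Bool.false_ne_true this)
        rw [← hL, ← hcl, ← hcr] at hle
        have hle' : (A ∪ B).ncard ≤ max A.ncard B.ncard := by
          have h2 : ((A ∪ B).ncard : ℕ∞) ≤ ((max A.ncard B.ncard : ℕ) : ℕ∞) := by
            rw [Nat.mono_cast.map_max]; exact hle
          exact_mod_cast h2
        rcases le_total A.ncard B.ncard with h | h
        · left
          have hBe : B = A ∪ B :=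
            Set.eq_of_subset_of_ncard_le Set.subset_union_right
              (hle'.trans (le_of_eq (max_eq_right h))) (Set.toFinite _)
          show A ⊆ B
          exact Set.subset_union_left.trans hBe.symm.subset
        · right
          have hAe : A = A ∪ B :=
            Set.eq_of_subset_of_ncard_le Set.subset_union_left
              (hle'.trans (le_of_eq (max_eq_left h))) (Set.toFinite _)
          show B ⊆ A
          exact Set.subset_union_right.trans hAe.symm.subset
    · rintro ⟨hhl, hhr, hjoin, hunion⟩
      have hml := (ihl hrl).mpr hhl
      have hmr := (ihr hrr).mpr hhr
      refine ⟨?_, hml, hmr⟩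
      have hcl : ((A.ncard : ℕ∞)) = (G.induce Ll).chromaticNumber := usesChi_leaves hml
      have hcr : ((B.ncard : ℕ∞)) = (G.induce Lr).chromaticNumber := usesChi_leaves hmr
      show (((σ '' (Ll ∪ Lr)).ncard : ℕ∞)) = (G.induce (Ll ∪ Lr)).chromaticNumber
      refine le_antisymm ?_ ?_
      · rw [himg]
        cases b with
        | true =>
          have hd : Disjoint A B := hjoin rfl
          rw [Set.ncard_union_eq hd (Set.toFinite _) (Set.toFinite _), Nat.cast_add,
            hcl, hcr]
          exact chi_join_ge G (fun x hx y hy => (hadj x hx y hy).mpr rfl)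
        | false =>
          rcases hunion rfl with h | h
          · rw [Set.union_eq_self_of_subset_left h, hcr]
            exact chi_mono G Set.subset_union_right
          · rw [Set.union_eq_self_of_subset_right h, hcl]
            exact chi_mono G Set.subset_union_left
      · exact chi_le_image G _ σ (fun x _ y _ => hproper x y)

end Helpers

/-- A proper coloring `σ` of a cograph `G` is recursively minimal
if and only if it is an hc-coloring of `G` (w.r.t. some binary cotree of `G`). -/
theorem recMin_iff_hc_coloring {V α : Type*} [Fintype V] [Nonempty V]
    (G : SimpleGraph V) (hG : IsCograph G)
    (σ : V → α) (hproper : ∀ x y, G.Adj x y → σ x ≠ σ y) :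
    IsRecMinColoring G σ ↔ ∃ T : Cotree V, Cotree.IsCotreeOf T G ∧ IsHCWrt σ T := by
  constructor
  · rintro ⟨T, hT, h⟩
    exact ⟨T, hT, (recMin_iff_hc_wrt G σ hproper T hT.1).mp h⟩
  · rintro ⟨T, hT, h⟩
    exact ⟨T, hT, (recMin_iff_hc_wrt G σ hproper T hT.1).mpr h⟩
end

section
/- Every cograph G admits a recursively minimal coloring. In particular, every greedy coloring of a cograph is recursively minimal. -/
/-! Basic notions: cographs, binary cotrees, hc-colorings, greedy colorings,
recursively minimal (color-minimal) colorings, and counting of hc-colorings. -/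

variable {V : Type*}

/-- No induced P4 within `S` for relation `r`. -/
def P4FreeOn (r : V → V → Prop) (S : Set V) : Prop :=
  ¬ ∃ a b c d, a ∈ S ∧ b ∈ S ∧ c ∈ S ∧ d ∈ S ∧ a ≠ b ∧ a ≠ c ∧ a ≠ d ∧ b ≠ c ∧ b ≠ d ∧ c ≠ d ∧
    r a b ∧ r b c ∧ r c d ∧ ¬ r a c ∧ ¬ r a d ∧ ¬ r b d

lemma P4FreeOn.mono {r : V → V → Prop} {S S' : Set V} (h : P4FreeOn r S) (hss : S' ⊆ S) :
    P4FreeOn r S' := by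
  intro ⟨a, b, c, d, ha, hb, hc, hd, rest⟩
  exact h ⟨a, b, c, d, hss ha, hss hb, hss hc, hss hd, rest⟩

lemma P4FreeOn.compl {r : V → V → Prop} (hsym : Symmetric r) {S : Set V} (h : P4FreeOn r S) :
    P4FreeOn (fun a b => a ≠ b ∧ ¬ r a b) S := by
  rintro ⟨a, b, c, d, ha, hb, hc, hd, hab, hac, had, hbc, hbd, hcd,
    rab, rbc, rcd, nac, nad, nbd⟩
  have rac : r a c := by by_contra h'; exact nac ⟨hac, h'⟩
  have rad : r a d := by by_contra h'; exact nad ⟨had, h'⟩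
  have rbd : r b d := by by_contra h'; exact nbd ⟨hbd, h'⟩
  exact h ⟨b, d, a, c, hb, hd, ha, hc, hbd, hab.symm, hbc, had.symm, Ne.symm hcd, hac,
    rbd, hsym rad, rac, fun h' => rab.2 (hsym h'), rbc.2, fun h' => rcd.2 (hsym h')⟩

section Inner

variable {r : V → V → Prop} {S A B : Set V} {v : V}

/-- reach within S -/
private def Rch (r : V → V → Prop) (S : Set V) (v : V) : V → Prop :=
  Relation.ReflTransGen (fun a b => a ∈ S ∧ b ∈ S ∧ r a b) v

lemma inner_split (hsym : Symmetric r)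
    (hP4 : P4FreeOn r S) (hS : S = insert v (A ∪ B)) (hv : v ∉ A ∪ B)
    (hA : A.Nonempty) (hB : B.Nonempty) (hAB : Disjoint A B)
    (hcross : ∀ a ∈ A, ∀ b ∈ B, ¬ r a b) :
    (∃ A' B' : Set V, A' ∪ B' = S ∧ Disjoint A' B' ∧ A'.Nonempty ∧ B'.Nonempty ∧
       ∀ a ∈ A', ∀ b ∈ B', ¬ r a b) ∨ (∀ u ∈ A ∪ B, r v u) := by
  classical
  by_cases hall : ∀ u ∈ S, Rch r S v u
  · right
    have hvS : v ∈ S := by rw [hS]; exact Set.mem_insert _ _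
    -- claim1: reaching into a part via first entry
    have claim1 : ∀ (X Y : Set V), (∀ a ∈ X, ∀ b ∈ Y, ¬ r a b) → v ∉ X ∪ Y →
        X ∪ Y = A ∪ B → ∀ u, Rch r S v u → u ∈ Y → ∃ b ∈ Y, r v b := by
      intro X Y hc hvXY hXY u hu
      induction hu with
      | refl => intro h; exact absurd (Or.inr h) hvXY
      | @tail w u hw hstep ih =>
        intro huY
        have hwS : w ∈ S := hstep.1
        rw [hS] at hwS
        rcases hwS with hwv | hw'
        · exact ⟨u, huY, hwv ▸ hstep.2.2⟩
        · rw [← hXY] at hw'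
          rcases hw' with hwX | hwY
          · exact absurd hstep.2.2 (hc w hwX u huY)
          · exact ih hwY
    -- claim2: find boundary edge inside a part
    have claim2 : ∀ (X Y : Set V), (∀ a ∈ X, ∀ b ∈ Y, ¬ r a b) → v ∉ X ∪ Y →
        X ∪ Y = A ∪ B → ∀ x, Rch r S v x → x ∈ X → ¬ r v x →
        ∃ y z, y ∈ X ∧ z ∈ X ∧ r y z ∧ r v y ∧ ¬ r v z := by
      intro X Y hc hvXY hXY x hx
      induction hx with
      | refl => intro h _; exact absurd (Or.inl h) hvXY
      | @tail w x hw hstep ih =>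
        intro hxX hnvx
        have hwS : w ∈ S := hstep.1
        rw [hS] at hwS
        rcases hwS with hwv | hw'
        · exact absurd (hwv ▸ hstep.2.2) hnvx
        · rw [← hXY] at hw'
          rcases hw' with hwX | hwY
          · by_cases hrvw : r v w
            · exact ⟨w, x, hwX, hxX, hstep.2.2, hrvw, hnvx⟩
            · exact ih hwX hrvw
          · exact absurd (hsym hstep.2.2) (hc x hxX w hwY)
    -- all of one part adjacent to v, parametric
    have main : ∀ (X Y : Set V), (∀ a ∈ X, ∀ b ∈ Y, ¬ r a b) → Disjoint X Y → v ∉ X ∪ Y →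
        X ∪ Y = A ∪ B → Y.Nonempty → X ⊆ S → Y ⊆ S → ∀ x ∈ X, r v x := by
      intro X Y hc hXYd hvXY hXY hYne hXS hYS x hxX
      by_contra hnvx
      obtain ⟨y, z, hyX, hzX, ryz, rvy, nvz⟩ :=
        claim2 X Y hc hvXY hXY x (hall x (hXS hxX)) hxX hnvx
      obtain ⟨b0, hb0⟩ := hYne
      obtain ⟨b, hbY, rvb⟩ := claim1 X Y hc hvXY hXY b0 (hall b0 (hYS hb0)) hb0
      have hzy : z ≠ y := fun h => nvz (h ▸ rvy)
      refine hP4 ⟨z, y, v, b, hXS hzX, hXS hyX, hvS, hYS hbY, hzy,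
        fun h => hvXY (h ▸ Or.inl hzX), fun h => nvz (h ▸ rvb),
        fun h => hvXY (h ▸ Or.inl hyX), fun h => (Set.disjoint_left.mp hXYd hyX) (h ▸ hbY),
        fun h => hvXY (h.symm ▸ Or.inr hbY),
        hsym ryz, hsym rvy, rvb, fun h => nvz (hsym h), hc z hzX b hbY, hc y hyX b hbY⟩
    have hAS : A ⊆ S := by rw [hS]; exact fun a ha => Set.mem_insert_of_mem _ (Or.inl ha)
    have hBS : B ⊆ S := by rw [hS]; exact fun a ha => Set.mem_insert_of_mem _ (Or.inr ha)
    rintro u (huA | huB)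
    · exact main A B hcross hAB hv rfl hB hAS hBS u huA
    · exact main B A (fun b hb a ha h => hcross a ha b hb (hsym h)) hAB.symm
        (fun h => hv (Set.union_comm B A ▸ h))
        (Set.union_comm A B ▸ rfl) hA hBS hAS u huB
  · push_neg at hall
    obtain ⟨w, hwS, hwn⟩ := hall
    left
    refine ⟨{y ∈ S | Rch r S v y}, {y ∈ S | ¬ Rch r S v y}, ?_, ?_, ?_, ?_, ?_⟩
    · ext x
      constructor
      · rintro (h | h) <;> exact h.1
      · intro hx
        by_cases h : Rch r S v x
        · exact Or.inl ⟨hx, h⟩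
        · exact Or.inr ⟨hx, h⟩
    · rw [Set.disjoint_left]; rintro a ⟨_, h⟩ ⟨_, h'⟩; exact h' h
    · exact ⟨v, by rw [hS]; exact Set.mem_insert _ _, Relation.ReflTransGen.refl⟩
    · exact ⟨w, hwS, hwn⟩
    · rintro a ⟨haS, haR⟩ b ⟨hbS, hbnR⟩ hrab
      exact hbnR (haR.tail ⟨haS, hbS, hrab⟩)

end Inner

lemma split_lemma {r : V → V → Prop} (hsym : Symmetric r) :
    ∀ n (S : Set V), S.Finite → S.ncard = n → 2 ≤ n → P4FreeOn r S →
    ∃ A B : Set V, A ∪ B = S ∧ Disjoint A B ∧ A.Nonempty ∧ B.Nonempty ∧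
      ((∀ a ∈ A, ∀ b ∈ B, ¬ r a b) ∨ (∀ a ∈ A, ∀ b ∈ B, r a b)) := by
  intro n
  induction n using Nat.strong_induction_on with
  | _ n IH =>
  intro S hfin hcard hn hP4
  rcases eq_or_lt_of_le hn with h2 | h3
  · -- exactly two vertices
    obtain ⟨x, y, hxy, hS⟩ := Set.ncard_eq_two.mp (by omega : S.ncard = 2)
    by_cases hr : r x y
    · exact ⟨{x}, {y}, by rw [hS]; rfl, Set.disjoint_singleton.mpr hxy,
        Set.singleton_nonempty _, Set.singleton_nonempty _,
        Or.inr (by rintro a rfl b rfl; exact hr)⟩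
    · exact ⟨{x}, {y}, by rw [hS]; rfl, Set.disjoint_singleton.mpr hxy,
        Set.singleton_nonempty _, Set.singleton_nonempty _,
        Or.inl (by rintro a rfl b rfl; exact hr)⟩
  · -- at least three vertices
    have hne : S.Nonempty := by
      rw [← Set.ncard_pos hfin]; omega
    obtain ⟨v, hv⟩ := hne
    set S' := S \ {v} with hS'def
    have hS'fin : S'.Finite := hfin.subset Set.diff_subset
    have hS'card : S'.ncard = n - 1 := by
      rw [hS'def, Set.ncard_diff_singleton_of_mem hv, hcard]
    have hS'sub : S' ⊆ S := Set.diff_subset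
    obtain ⟨A, B, hAB, hd, hAne, hBne, hflag⟩ :=
      IH (n-1) (by omega) S' hS'fin hS'card (by omega) (hP4.mono hS'sub)
    have hSins : S = insert v (A ∪ B) := by
      rw [hAB, hS'def, Set.insert_diff_singleton, Set.insert_eq_of_mem hv]
    have hvAB : v ∉ A ∪ B := by rw [hAB, hS'def]; simp
    rcases hflag with hno | hall
    · rcases inner_split hsym hP4 hSins hvAB hAne hBne hd hno with h | h
      · obtain ⟨C, D, h1, h2, h3, h4, h5⟩ := h
        exact ⟨C, D, h1, h2, h3, h4, Or.inl h5⟩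
      · refine ⟨{v}, A ∪ B, ?_, ?_, Set.singleton_nonempty _,
          hAne.mono Set.subset_union_left, Or.inr ?_⟩
        · rw [Set.singleton_union, ← hSins]
        · exact Set.disjoint_singleton_left.mpr hvAB
        · rintro a rfl b hb; exact h b hb
    · set r' : V → V → Prop := fun a b => a ≠ b ∧ ¬ r a b with hr'def
      have hsym' : Symmetric r' := fun a b h => ⟨h.1.symm, fun h' => h.2 (hsym h')⟩
      have hP4' : P4FreeOn r' S := hP4.compl hsym
      have hno' : ∀ a ∈ A, ∀ b ∈ B, ¬ r' a b := fun a ha b hb h => h.2 (hall a ha b hb)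
      rcases inner_split hsym' hP4' hSins hvAB hAne hBne hd hno' with h | h
      · obtain ⟨C, D, hCD, hdCD, hCne, hDne, hcr⟩ := h
        refine ⟨C, D, hCD, hdCD, hCne, hDne, Or.inr ?_⟩
        intro a ha b hb
        by_contra hrab
        exact hcr a ha b hb ⟨fun he => (Set.disjoint_left.mp hdCD ha) (he ▸ hb), hrab⟩
      · refine ⟨{v}, A ∪ B, ?_, Set.disjoint_singleton_left.mpr hvAB,
          Set.singleton_nonempty _, hAne.mono Set.subset_union_left, Or.inl ?_⟩
        · rw [Set.singleton_union, ← hSins]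
        · rintro a rfl b hb; exact (h b hb).2

lemma exists_cotree_on (G : SimpleGraph V) :
    ∀ n (S : Set V), S.Finite → S.ncard = n → S.Nonempty → P4FreeOn G.Adj S →
    ∃ T : Cotree V, Cotree.leaves T = S ∧ Cotree.Represents G T := by
  intro n
  induction n using Nat.strong_induction_on with
  | _ n IH =>
  intro S hfin hcard hne hP4
  have hpos : 0 < n := hcard ▸ (Set.ncard_pos hfin).mpr hne
  rcases eq_or_lt_of_le (Nat.succ_le_of_lt hpos) with h1 | h2
  · obtain ⟨v, hS⟩ := Set.ncard_eq_one.mp (by omega : S.ncard = 1)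
    exact ⟨Cotree.leaf v, hS.symm, trivial⟩
  · obtain ⟨A, B, hAB, hd, hAne, hBne, hflag⟩ :=
      split_lemma (fun _ _ h => h.symm) n S hfin hcard (by omega) hP4
    have hAS : A ⊆ S := hAB ▸ Set.subset_union_left
    have hBS : B ⊆ S := hAB ▸ Set.subset_union_right
    have hAfin : A.Finite := hfin.subset hAS
    have hBfin : B.Finite := hfin.subset hBS
    have hcards : A.ncard + B.ncard = n := by
      rw [← hcard, ← hAB, Set.ncard_union_eq hd hAfin hBfin]
    have hApos : 0 < A.ncard := (Set.ncard_pos hAfin).mpr hAne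
    have hBpos : 0 < B.ncard := (Set.ncard_pos hBfin).mpr hBne
    obtain ⟨TA, hTAl, hTAr⟩ := IH A.ncard (by omega) A hAfin rfl hAne (hP4.mono hAS)
    obtain ⟨TB, hTBl, hTBr⟩ := IH B.ncard (by omega) B hBfin rfl hBne (hP4.mono hBS)
    rcases hflag with hno | hall
    · refine ⟨Cotree.node false TA TB, ?_, hTAr, hTBr, ?_, ?_⟩
      · show Cotree.leaves TA ∪ Cotree.leaves TB = S
        rw [hTAl, hTBl, hAB]
      · rw [hTAl, hTBl]; exact hd
      · rw [hTAl, hTBl]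
        intro x hx y hy
        simp only [Bool.false_eq_true, iff_false]
        exact hno x hx y hy
    · refine ⟨Cotree.node true TA TB, ?_, hTAr, hTBr, ?_, ?_⟩
      · show Cotree.leaves TA ∪ Cotree.leaves TB = S
        rw [hTAl, hTBl, hAB]
      · rw [hTAl, hTBl]; exact hd
      · rw [hTAl, hTBl]
        intro x hx y hy
        simp only [iff_true]
        exact hall x hx y hy

noncomputable def greedyF {n : ℕ} (adj : Fin n → Fin n → Prop) : Fin n → ℕ
  | i => sInf {c | 1 ≤ c ∧ ∀ j : Fin n, j < i → adj j i → greedyF adj j ≠ c}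
termination_by i => i.val
decreasing_by omega

lemma greedyF_spec {n : ℕ} (adj : Fin n → Fin n → Prop) (i : Fin n) :
    greedyF adj i ∈ {c | 1 ≤ c ∧ ∀ j : Fin n, j < i → adj j i → greedyF adj j ≠ c} := by
  rw [greedyF]
  apply Nat.sInf_mem
  refine ⟨(Finset.univ.sup fun j : Fin n => greedyF adj j) + 1, by omega, ?_⟩
  intro j hj _ h
  have : greedyF adj j ≤ Finset.univ.sup fun j : Fin n => greedyF adj j :=
    Finset.le_sup (Finset.mem_univ j)
  omega

lemma greedyF_below {n : ℕ} (adj : Fin n → Fin n → Prop) (i : Fin n) {c : ℕ}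
    (h1 : 1 ≤ c) (h2 : c < greedyF adj i) :
    ∃ j : Fin n, j < i ∧ adj j i ∧ greedyF adj j = c := by
  have : c ∉ {c | 1 ≤ c ∧ ∀ j : Fin n, j < i → adj j i → greedyF adj j ≠ c} := by
    intro hc
    have := Nat.sInf_le hc
    rw [← greedyF] at this
    omega
  simp only [Set.mem_setOf_eq, not_and, not_forall] at this
  obtain ⟨j, hj, hadj, hne⟩ := this h1
  exact ⟨j, hj, hadj, not_not.mp hne⟩

lemma exists_greedy [Fintype V] (G : SimpleGraph V) : ∃ σ : V → ℕ, IsGreedyColoring G σ := by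
  classical
  let e := Fintype.equivFin V
  let adj : Fin (Fintype.card V) → Fin (Fintype.card V) → Prop :=
    fun i j => G.Adj (e.symm i) (e.symm j)
  refine ⟨fun v => greedyF adj (e v), ?_, fun v => (greedyF_spec adj (e v)).1, ?_⟩
  · intro x y hxy
    have hne : e x ≠ e y := fun h => G.ne_of_adj hxy (e.injective h)
    rcases lt_or_gt_of_ne hne with h | h
    · intro hc
      exact (greedyF_spec adj (e y)).2 (e x) h
        (by simp only [adj, Equiv.symm_apply_apply]; exact hxy) hc
    · intro hc
      exact (greedyF_spec adj (e x)).2 (e y) h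
        (by simp only [adj, Equiv.symm_apply_apply]; exact hxy.symm) hc.symm
  · intro v c h1 h2
    obtain ⟨j, hj, hadj, hc⟩ := greedyF_below adj (e v) h1 h2
    refine ⟨e.symm j, ?_, ?_⟩
    · have : G.Adj (e.symm j) (e.symm (e v)) := hadj
      rw [Equiv.symm_apply_apply] at this
      exact this.symm
    · show greedyF adj (e (e.symm j)) = c
      rw [Equiv.apply_symm_apply]; exact hc

/-- `L` is a module of `G`. -/
def ModOn (G : SimpleGraph V) (L : Set V) : Prop :=
  ∀ u ∉ L, (∀ w ∈ L, G.Adj u w) ∨ (∀ w ∈ L, ¬ G.Adj u w)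

lemma ModOn.mono {G : SimpleGraph V} {L L' : Set V} (h : ModOn G L) (hss : L' ⊆ L)
    (hext : ∀ u, u ∉ L' → u ∈ L → (∀ w ∈ L', G.Adj u w) ∨ (∀ w ∈ L', ¬ G.Adj u w)) :
    ModOn G L' := by
  intro u hu
  by_cases huL : u ∈ L
  · exact hext u hu huL
  · rcases h u huL with h' | h'
    · exact Or.inl fun w hw => h' w (hss hw)
    · exact Or.inr fun w hw => h' w (hss hw)

lemma Cotree.leaves_nonempty : ∀ T : Cotree V, (Cotree.leaves T).Nonempty
  | .leaf v => ⟨v, rfl⟩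
  | .node _ l r => (Cotree.leaves_nonempty l).mono Set.subset_union_left

lemma greedy_on_module {G : SimpleGraph V} {σ : V → ℕ} (hσ : IsGreedyColoring G σ)
    {M : Set V} (hM : ModOn G M) {v : V} (hv : v ∈ M) {c : ℕ}
    (hc : c ∈ σ '' M) (hlt : c < σ v) : ∃ u ∈ M, G.Adj v u ∧ σ u = c := by
  obtain ⟨w, hwM, hwc⟩ := hc
  have h1 : 1 ≤ c := hwc ▸ hσ.2.1 w
  obtain ⟨u, huv, huc⟩ := hσ.2.2 v c h1 hlt
  by_cases huM : u ∈ M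
  · exact ⟨u, huM, huv, huc⟩
  · rcases hM u huM with h' | h'
    · exact absurd (huc.trans hwc.symm) (hσ.1 u w (h' w hwM))
    · exact absurd huv.symm (h' v hv)

lemma chi_eq [Fintype V] {G : SimpleGraph V} {σ : V → ℕ} {L : Set V} (hLne : L.Nonempty)
    (hprop : ∀ x ∈ L, ∀ y ∈ L, G.Adj x y → σ x ≠ σ y)
    (hlow : ∀ τ : V → ℕ, (∀ x ∈ L, ∀ y ∈ L, G.Adj x y → τ x ≠ τ y) →
      (σ '' L).ncard ≤ (τ '' L).ncard) :
    UsesChiColors G σ L := by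
  classical
  set k := (σ '' L).ncard with hk
  have hfin : (σ '' L).Finite := (L.toFinite.image σ)
  -- upper bound: χ ≤ k
  have hcol : (G.induce L).Colorable k := by
    haveI : Fintype ↥(σ '' L) := hfin.fintype
    have hcard : Fintype.card ↥(σ '' L) = k := by
      rw [hk, ← Nat.card_coe_set_eq, Nat.card_eq_fintype_card]
    let e : ↥(σ '' L) ≃ Fin k := Fintype.equivFinOfCardEq hcard
    refine ⟨SimpleGraph.Coloring.mk (fun v => e ⟨σ ↑v, ⟨↑v, v.2, rfl⟩⟩) ?_⟩
    intro a b hab hc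
    have : σ (a : V) ≠ σ (b : V) := hprop a a.2 b b.2 hab
    exact this (congrArg Subtype.val (e.injective hc))
  have hupper : (G.induce L).chromaticNumber ≤ (k : ℕ∞) :=
    hcol.chromaticNumber_le
  -- lower bound
  have hlower : (k : ℕ∞) ≤ (G.induce L).chromaticNumber := by
    rw [hcol.chromaticNumber_eq_sInf]
    refine Nat.cast_le.mpr (le_csInf ⟨k, hcol⟩ ?_)
    intro m hm
    obtain ⟨C⟩ := hm
    set τ : V → ℕ := fun v => if h : v ∈ L then (C ⟨v, h⟩ : ℕ) else 0 with hτ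
    have hτprop : ∀ x ∈ L, ∀ y ∈ L, G.Adj x y → τ x ≠ τ y := by
      intro x hx y hy hxy h
      rw [hτ] at h
      simp only [dif_pos hx, dif_pos hy] at h
      exact C.valid (by exact hxy : (G.induce L).Adj ⟨x, hx⟩ ⟨y, hy⟩) (Fin.val_injective h)
    have h1 : k ≤ (τ '' L).ncard := hlow τ hτprop
    have h2 : (τ '' L).ncard ≤ m := by
      have hsub : τ '' L ⊆ ↑(Finset.range m) := by
        rintro _ ⟨x, hx, rfl⟩
        rw [hτ]
        simp only [dif_pos hx, Finset.coe_range, Set.mem_Iio]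
        exact (C ⟨x, hx⟩).2
      calc (τ '' L).ncard ≤ (↑(Finset.range m) : Set ℕ).ncard :=
            Set.ncard_le_ncard hsub (Finset.range m).finite_toSet
        _ = m := by rw [Set.ncard_coe_finset, Finset.card_range]
    exact le_trans h1 h2
  exact le_antisymm hlower hupper

lemma recmin_main [Fintype V] {G : SimpleGraph V} {σ : V → ℕ} (hσ : IsGreedyColoring G σ) :
    ∀ T : Cotree V, Cotree.Represents G T → ModOn G (Cotree.leaves T) →
      IsRecMinWrt G σ T ∧
      (∀ τ : V → ℕ, (∀ x ∈ Cotree.leaves T, ∀ y ∈ Cotree.leaves T, G.Adj x y → τ x ≠ τ y) →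
        (σ '' Cotree.leaves T).ncard ≤ (τ '' Cotree.leaves T).ncard) := by
  intro T
  induction T with
  | leaf v =>
    intro _ _
    have hQ : ∀ τ : V → ℕ, (∀ x ∈ Cotree.leaves (Cotree.leaf v),
        ∀ y ∈ Cotree.leaves (Cotree.leaf v), G.Adj x y → τ x ≠ τ y) →
        (σ '' Cotree.leaves (Cotree.leaf v)).ncard ≤
          (τ '' Cotree.leaves (Cotree.leaf v)).ncard := by
      intro τ _
      show (σ '' {v}).ncard ≤ (τ '' {v}).ncard
      rw [Set.image_singleton, Set.image_singleton, Set.ncard_singleton, Set.ncard_singleton]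
    refine ⟨?_, hQ⟩
    show UsesChiColors G σ {v}
    exact chi_eq (Set.singleton_nonempty v)
      (fun x hx y hy hxy => by
        rw [Set.mem_singleton_iff] at hx hy
        subst hx; subst hy; exact absurd hxy (G.irrefl))
      (hQ)
  | node b l r IHl IHr =>
    intro hrep hmod
    obtain ⟨hl, hr, hdisj, hcross⟩ := hrep
    set A := Cotree.leaves l with hA
    set B := Cotree.leaves r with hB
    have hABl : Cotree.leaves (Cotree.node b l r) = A ∪ B := rfl
    -- children are modules
    have modA : ModOn G A := by
      refine hmod.mono (hABl ▸ Set.subset_union_left) ?_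
      intro u huA huAB
      rcases huAB with h | huB
      · exact absurd h huA
      · cases b with
        | true => exact Or.inl fun w hw => ((hcross w hw u huB).mpr rfl).symm
        | false => exact Or.inr fun w hw h => by simpa using (hcross w hw u huB).mp h.symm
    have modB : ModOn G B := by
      refine hmod.mono (hABl ▸ Set.subset_union_right) ?_
      intro u huB huAB
      rcases huAB with huA | h
      · cases b with
        | true => exact Or.inl fun w hw => (hcross u huA w hw).mpr rfl
        | false => exact Or.inr fun w hw h => by simpa using (hcross u huA w hw).mp h
      · exact absurd h huB
    obtain ⟨hRl, hQl⟩ := IHl hl modA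
    obtain ⟨hRr, hQr⟩ := IHr hr modB
    have hσAfin : (σ '' A).Finite := A.toFinite.image σ
    have hσBfin : (σ '' B).Finite := B.toFinite.image σ
    have hQ : ∀ τ : V → ℕ, (∀ x ∈ A ∪ B, ∀ y ∈ A ∪ B, G.Adj x y → τ x ≠ τ y) →
        (σ '' (A ∪ B)).ncard ≤ (τ '' (A ∪ B)).ncard := by
      intro τ hτ
      have hτA : ∀ x ∈ A, ∀ y ∈ A, G.Adj x y → τ x ≠ τ y :=
        fun x hx y hy => hτ x (Or.inl hx) y (Or.inl hy)
      have hτB : ∀ x ∈ B, ∀ y ∈ B, G.Adj x y → τ x ≠ τ y :=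
        fun x hx y hy => hτ x (Or.inr hx) y (Or.inr hy)
      cases b with
      | true =>
        have hσd : Disjoint (σ '' A) (σ '' B) := by
          rw [Set.disjoint_left]
          rintro s ⟨x, hx, rfl⟩ ⟨y, hy, hs⟩
          exact hσ.1 x y ((hcross x hx y hy).mpr rfl) hs.symm
        have hτd : Disjoint (τ '' A) (τ '' B) := by
          rw [Set.disjoint_left]
          rintro s ⟨x, hx, rfl⟩ ⟨y, hy, hs⟩
          exact hτ x (Or.inl hx) y (Or.inr hy) ((hcross x hx y hy).mpr rfl) hs.symm
        rw [Set.image_union, Set.image_union,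
          Set.ncard_union_eq hσd hσAfin hσBfin,
          Set.ncard_union_eq hτd (A.toFinite.image τ) (B.toFinite.image τ)]
        exact Nat.add_le_add (hQl τ hτA) (hQr τ hτB)
      | false =>
        have noedge : ∀ x ∈ A, ∀ y ∈ B, ¬ G.Adj x y :=
          fun x hx y hy h => by simpa using (hcross x hx y hy).mp h
        have hmod' : ModOn G (A ∪ B) := hABl ▸ hmod
        have key : ∀ X Y : Set V, X ∪ Y = A ∪ B → (∀ x ∈ X, ∀ y ∈ Y, ¬ G.Adj x y) →
            ∀ s t : ℕ, s ∈ σ '' X → s ∉ σ '' Y → t ∈ σ '' Y → s < t → False := by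
          rintro X Y hXY hno s t hsX hsY ⟨v, hvY, hvt⟩ hst
          have hsM : s ∈ σ '' (A ∪ B) := by
            rw [← hXY, Set.image_union]; exact Or.inl hsX
          have hvM : v ∈ A ∪ B := hXY ▸ Or.inr hvY
          obtain ⟨u, huM, hadj, hus⟩ :=
            greedy_on_module hσ hmod' hvM hsM (by omega : s < σ v)
          rw [← hXY] at huM
          rcases huM with huX | huY
          · exact hno u huX v hvY hadj.symm
          · exact hsY ⟨u, huY, hus⟩
        have hnest : σ '' A ⊆ σ '' B ∨ σ '' B ⊆ σ '' A := by
          by_contra hcon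
          push_neg at hcon
          obtain ⟨a, haA, haB⟩ := Set.not_subset.mp hcon.1
          obtain ⟨c, hcB, hcA⟩ := Set.not_subset.mp hcon.2
          rcases lt_trichotomy a c with h | h | h
          · exact key A B rfl noedge a c haA haB hcB h
          · exact haB (h ▸ hcB)
          · exact key B A (Set.union_comm B A)
              (fun y hy x hx h => noedge x hx y hy h.symm) c a hcB hcA haA h
        rcases hnest with hss | hss
        · rw [Set.image_union, Set.union_eq_self_of_subset_left hss]
          calc (σ '' B).ncard ≤ (τ '' B).ncard := hQr τ hτB
            _ ≤ (τ '' (A ∪ B)).ncard :=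
              Set.ncard_le_ncard (Set.image_mono (f := τ) Set.subset_union_right)
                ((A ∪ B).toFinite.image τ)
        · rw [Set.image_union, Set.union_eq_self_of_subset_right hss]
          calc (σ '' A).ncard ≤ (τ '' A).ncard := hQl τ hτA
            _ ≤ (τ '' (A ∪ B)).ncard :=
              Set.ncard_le_ncard (Set.image_mono (f := τ) Set.subset_union_left)
                ((A ∪ B).toFinite.image τ)
    refine ⟨⟨?_, hRl, hRr⟩, hQ⟩
    exact chi_eq ((Cotree.leaves_nonempty l).mono Set.subset_union_left)
      (fun x _ y _ => hσ.1 x y) hQ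

/-- Every cograph admits a recursively minimal coloring; in
particular, every greedy coloring of a cograph is recursively minimal. -/
theorem exists_recMin_coloring_and_greedy_recMin {V : Type*} [Fintype V] [Nonempty V]
    (G : SimpleGraph V) (hG : IsCograph G) :
    (∃ σ : V → ℕ, (∀ x y, G.Adj x y → σ x ≠ σ y) ∧ IsRecMinColoring G σ) ∧
      (∀ σ : V → ℕ, IsGreedyColoring G σ → IsRecMinColoring G σ) := by
  have hP4 : P4FreeOn G.Adj (Set.univ : Set V) := by
    rintro ⟨a, b, c, d, _, _, _, _, rest⟩
    exact hG ⟨a, b, c, d, rest⟩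
  obtain ⟨T, hTl, hTr⟩ := exists_cotree_on G (Set.univ : Set V).ncard Set.univ
    Set.finite_univ rfl Set.univ_nonempty hP4
  have hmod : ModOn G (Cotree.leaves T) := by
    rw [hTl]
    intro u hu
    exact absurd (Set.mem_univ u) hu
  have h2 : ∀ σ : V → ℕ, IsGreedyColoring G σ → IsRecMinColoring G σ := by
    intro σ hσ
    exact ⟨T, ⟨hTr, hTl⟩, (recmin_main hσ T hTr hmod).1⟩
  obtain ⟨σ, hσ⟩ := exists_greedy G
  exact ⟨⟨σ, hσ.1, h2 σ hσ⟩, h2⟩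
end

section
/- Let G be a cograph that is the disjoint union of its connected components G1, …, Gn, and suppose each Gi carries a recursively minimal coloring σi. Let G* be a component whose chromatic number χ(G*) is maximal among χ(G1), …, χ(Gn), with color set S = σ*(V(G*)). Recolor every other component Gj by composing σj with an arbitrary injection φj : σj(V(Gj)) → S. Then the resulting coloring σ of G is a recursively minimal coloring of G, and it uses exactly the color set S, so |σ(V(G))| = χ(G) = max_i χ(Gi). -/
/-! Basic notions: cographs, binary cotrees, hc-colorings, greedy colorings,
recursively minimal (color-minimal) colorings, and counting of hc-colorings. -/

variable {V : Type*}

/-! ### Auxiliary lemmas -/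

open SimpleGraph Set

section Aux

variable {W α : Type*}

/-- inclusion embedding between induced subgraphs -/
def inclEmb (G : SimpleGraph V) {s t : Set V} (h : s ⊆ t) : G.induce s ↪g G.induce t :=
  ⟨⟨Set.inclusion h, Set.inclusion_injective h⟩, Iff.rfl⟩

lemma chi_induce_mono (G : SimpleGraph V) {s t : Set V} (h : s ⊆ t) :
    (G.induce s).chromaticNumber ≤ (G.induce t).chromaticNumber :=
  SimpleGraph.chromaticNumber_mono_of_hom (inclEmb G h).toHom

noncomputable def imgIso (G : SimpleGraph V) {s : Set V} (L : Set ↥s) :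
    (G.induce s).induce L ≃g G.induce (Subtype.val '' L) :=
  ⟨Equiv.Set.image Subtype.val L Subtype.val_injective, Iff.rfl⟩

lemma chi_img (G : SimpleGraph V) {s : Set V} (L : Set ↥s) :
    ((G.induce s).induce L).chromaticNumber = (G.induce (Subtype.val '' L)).chromaticNumber :=
  le_antisymm (chromaticNumber_mono_of_hom (imgIso G L).toEmbedding.toHom)
    (chromaticNumber_mono_of_hom (imgIso G L).symm.toEmbedding.toHom)

/-- map of a cotree along a function on vertices -/
def Cotree.map (f : V → W) : Cotree V → Cotree W
  | .leaf v => .leaf (f v)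
  | .node b l r => .node b (Cotree.map f l) (Cotree.map f r)

lemma Cotree.leaves_map (f : V → W) (T : Cotree V) :
    (T.map f).leaves = f '' T.leaves := by
  induction T with
  | leaf v => simp [Cotree.map, Cotree.leaves]
  | node b l r ihl ihr => simp [Cotree.map, Cotree.leaves, ihl, ihr, Set.image_union]

/-- A cotree representing an induced subgraph maps to a cotree piece of the big graph. -/
lemma represents_map (G : SimpleGraph V) {s : Set V} (T : Cotree ↥s)
    (h : Cotree.Represents (G.induce s) T) : Cotree.Represents G (T.map Subtype.val) := by
  induction T with
  | leaf v => trivial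
  | node b l r ihl ihr =>
    obtain ⟨hl, hr, hd, hadj⟩ := h
    refine ⟨ihl hl, ihr hr, ?_, ?_⟩
    · rw [Cotree.leaves_map, Cotree.leaves_map]
      exact (Set.disjoint_image_iff Subtype.val_injective).2 hd
    · intro x hx y hy
      rw [Cotree.leaves_map] at hx hy
      obtain ⟨x', hx', rfl⟩ := hx
      obtain ⟨y', hy', rfl⟩ := hy
      exact hadj x' hx' y' hy'

/-- transfer of `UsesChiColors` from an induced subgraph to the whole graph,
allowing an injective recoloring. -/
lemma usesChi_transfer (G : SimpleGraph V) {s : Set V} (σ g : V → α) (ψ : α → α)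
    (L : Set ↥s) (h1 : UsesChiColors (G.induce s) (fun x => σ x.1) L)
    (h2 : Set.InjOn ψ (σ '' s))
    (h3 : ∀ x ∈ Subtype.val '' L, g x = ψ (σ x)) :
    UsesChiColors G g (Subtype.val '' L) := by
  unfold UsesChiColors at h1 ⊢
  rw [← chi_img, ← h1]
  congr 1
  have himg : g '' (Subtype.val '' L) = ψ '' (σ '' (Subtype.val '' L)) := by
    rw [Set.image_congr h3]
    exact Set.image_comp ψ σ _
  rw [himg]
  have hsub : σ '' (Subtype.val '' L) ⊆ σ '' s := by
    apply Set.image_mono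
    rintro x ⟨x', _, rfl⟩; exact x'.2
  rw [Set.ncard_image_of_injOn (h2.mono hsub)]
  congr 1
  rw [← Set.image_comp]
  rfl

end Aux

section Aux2
variable {α : Type*}

lemma recMin_map (G : SimpleGraph V) {s : Set V} (σ g : V → α) (ψ : α → α)
    (h2 : Set.InjOn ψ (σ '' s)) (h3 : ∀ x ∈ s, g x = ψ (σ x))
    (T : Cotree ↥s) (h : IsRecMinWrt (G.induce s) (fun x => σ x.1) T) :
    IsRecMinWrt G g (T.map Subtype.val) := by
  have h3' : ∀ (L : Set ↥s), ∀ x ∈ Subtype.val '' L, g x = ψ (σ x) := by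
    rintro L x ⟨x', _, rfl⟩; exact h3 _ x'.2
  induction T with
  | leaf v =>
    have := usesChi_transfer G σ g ψ {v} h h2 (h3' {v})
    rw [Set.image_singleton] at this
    exact this
  | node b l r ihl ihr =>
    obtain ⟨hU, hl, hr⟩ := h
    have := usesChi_transfer G σ g ψ (Cotree.leaves l ∪ Cotree.leaves r) hU h2
      (h3' _)
    rw [Set.image_union] at this
    exact ⟨by rw [Cotree.leaves_map, Cotree.leaves_map]; exact this, ihl hl, ihr hr⟩

lemma usesChi_univ_of_recMin {H : SimpleGraph W} {f : W → α} {T : Cotree W}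
    (hL : T.leaves = Set.univ) (hrm : IsRecMinWrt H f T) :
    UsesChiColors H f Set.univ := by
  cases T with
  | leaf v => exact (show ({v} : Set W) = Set.univ from hL) ▸ hrm
  | node b l r =>
    exact (show (Cotree.leaves l ∪ Cotree.leaves r : Set W) = Set.univ from hL) ▸ hrm.1

end Aux2
/-- Let `G` be a cograph whose connected components all carry
recursively minimal colorings (under `σ`), let `C*` be a component of maximal
chromatic number with color set `S = σ(V(G*))`, and recolor every other component
by an injection of its color set into `S` (keeping the colors on `C*`). Then the
resulting coloring `σ'` is a recursively minimal coloring of `G`, it uses exactly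
the color set `S`, and `|S| = χ(G) = max_i χ(G_i)`. -/
theorem recMin_of_recolored_components {V α : Type*} [Fintype V] [Nonempty V]
    (G : SimpleGraph V) (hG : IsCograph G)
    (σ : V → α) (hproper : ∀ x y, G.Adj x y → σ x ≠ σ y)
    (hcomp : ∀ C : G.ConnectedComponent,
      IsRecMinColoring (G.induce C.supp) (fun x => σ x.1))
    (Cstar : G.ConnectedComponent)
    (hmax : ∀ C : G.ConnectedComponent,
      (G.induce C.supp).chromaticNumber ≤ (G.induce Cstar.supp).chromaticNumber)
    (φ : G.ConnectedComponent → α → α)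
    (hφinj : ∀ C : G.ConnectedComponent, Set.InjOn (φ C) (σ '' C.supp))
    (hφran : ∀ C : G.ConnectedComponent, ∀ a ∈ σ '' C.supp, φ C a ∈ σ '' Cstar.supp)
    (hφstar : ∀ a ∈ σ '' Cstar.supp, φ Cstar a = a)
    (σ' : V → α) (hσ' : ∀ v, σ' v = φ (G.connectedComponentMk v) (σ v)) :
    IsRecMinColoring G σ' ∧ Set.range σ' = σ '' Cstar.supp ∧
      ((σ '' Cstar.supp).ncard : ℕ∞) = G.chromaticNumber ∧
      G.chromaticNumber =
        ⨆ C : G.ConnectedComponent, (G.induce C.supp).chromaticNumber := by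

  classical
  set S := σ '' Cstar.supp with hSdef
  -- every vertex lies in the supp of its connected component
  have hmem : ∀ v : V, v ∈ (G.connectedComponentMk v).supp := fun v =>
    (SimpleGraph.ConnectedComponent.mem_supp_iff _ v).2 rfl
  -- σ' takes values in S
  have hS' : ∀ v, σ' v ∈ S := by
    intro v
    rw [hσ' v]
    exact hφran _ _ ⟨v, hmem v, rfl⟩
  -- σ' is a proper coloring of G
  have hprop' : ∀ x y, G.Adj x y → σ' x ≠ σ' y := by
    intro x y hxy
    have hcc := SimpleGraph.ConnectedComponent.connectedComponentMk_eq_of_adj hxy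
    rw [hσ' x, hσ' y, hcc]
    have hx : x ∈ (G.connectedComponentMk y).supp := by
      rw [SimpleGraph.ConnectedComponent.mem_supp_iff]; exact hcc
    exact (hφinj _).ne ⟨x, hx, rfl⟩ ⟨y, hmem y, rfl⟩ (hproper x y hxy)
  -- |S| equals the chromatic number of the star component
  have hSchi : ((S.ncard : ℕ∞)) = (G.induce Cstar.supp).chromaticNumber := by
    obtain ⟨T, ⟨hrep, hleaf⟩, hrm⟩ := hcomp Cstar
    have hUC := usesChi_univ_of_recMin hleaf hrm
    have := usesChi_transfer G σ σ id Set.univ hUC (Set.injOn_id _)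
      (fun x _ => rfl)
    rw [Set.image_univ, Subtype.range_coe] at this
    exact this
  have : Fintype ↥S := (Set.toFinite S).fintype
  -- any induced subgraph is colorable with |S| colors via σ'
  have hchi_le : ∀ L : Set V, (G.induce L).chromaticNumber ≤ (S.ncard : ℕ∞) := by
    intro L
    have C : (G.induce L).Coloring ↥S :=
      SimpleGraph.Coloring.mk (fun x => ⟨σ' x.1, hS' x.1⟩)
        (fun {a b} hab h => hprop' a b hab (congrArg Subtype.val h))
    have h1 := C.colorable.chromaticNumber_le
    rwa [show Fintype.card ↥S = S.ncard by
      rw [← Nat.card_coe_set_eq, Nat.card_eq_fintype_card]] at h1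
  -- σ' uses exactly S on any set containing the star component
  have himgS : ∀ L : Set V, Cstar.supp ⊆ L → σ' '' L = S := by
    intro L hsub
    apply Set.Subset.antisymm
    · rintro a ⟨x, _, rfl⟩; exact hS' x
    · rintro a ⟨x, hx, rfl⟩
      refine ⟨x, hsub hx, ?_⟩
      rw [hσ' x, (SimpleGraph.ConnectedComponent.mem_supp_iff _ _).1 hx]
      exact hφstar _ ⟨x, hx, rfl⟩
  have hkey : ∀ L : Set V, Cstar.supp ⊆ L → UsesChiColors G σ' L := by
    intro L hsub
    unfold UsesChiColors
    rw [himgS L hsub]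
    exact le_antisymm (hSchi ▸ chi_induce_mono G hsub) (hchi_le L)
  -- mapped recursively minimal trees for each component
  have hMC : ∀ C : G.ConnectedComponent, ∃ t : Cotree V,
      t.leaves = C.supp ∧ Cotree.Represents G t ∧ IsRecMinWrt G σ' t := by
    intro C
    obtain ⟨T, ⟨hrep, hleaf⟩, hrm⟩ := hcomp C
    refine ⟨T.map Subtype.val, ?_, represents_map G T hrep, ?_⟩
    · rw [Cotree.leaves_map, hleaf, Set.image_univ, Subtype.range_coe]
    · refine recMin_map G σ σ' (φ C) (hφinj C) ?_ T hrm
      intro x hx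
      rw [hσ' x, (SimpleGraph.ConnectedComponent.mem_supp_iff _ _).1 hx]
  have hdisj : ∀ C D : G.ConnectedComponent, C ≠ D →
      Disjoint (SimpleGraph.ConnectedComponent.supp C)
        (SimpleGraph.ConnectedComponent.supp D) := by
    intro C D hne
    rw [Set.disjoint_left]
    intro x hxC hxD
    exact hne (((SimpleGraph.ConnectedComponent.mem_supp_iff _ _).1 hxC).symm.trans
      ((SimpleGraph.ConnectedComponent.mem_supp_iff _ _).1 hxD))
  -- building the cotree component by component
  have hbuild : ∀ cs : List G.ConnectedComponent, Cstar ∉ cs → cs.Nodup →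
      ∃ t : Cotree V,
        t.leaves = Cstar.supp ∪ (⋃ C ∈ cs, SimpleGraph.ConnectedComponent.supp C) ∧
        Cotree.Represents G t ∧ IsRecMinWrt G σ' t := by
    intro cs
    induction cs with
    | nil =>
      intro _ _
      obtain ⟨t, h1, h2, h3⟩ := hMC Cstar
      exact ⟨t, by simp [h1], h2, h3⟩
    | cons C cs ih =>
      intro hns hnd
      obtain ⟨t, h1, h2, h3⟩ := ih (fun h => hns (List.mem_cons_of_mem _ h))
        (List.Nodup.of_cons hnd)
      obtain ⟨tc, hc1, hc2, hc3⟩ := hMC C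
      have hxcomp : ∀ x ∈ t.leaves, G.connectedComponentMk x ≠ C := by
        intro x hx
        rw [h1] at hx
        rcases hx with hx | hx
        · have hCne : Cstar ≠ C := fun h => hns (h ▸ List.mem_cons_self)
          rw [(SimpleGraph.ConnectedComponent.mem_supp_iff _ _).1 hx]
          exact hCne
        · obtain ⟨D, hD, hx⟩ := Set.mem_iUnion₂.1 hx
          rw [(SimpleGraph.ConnectedComponent.mem_supp_iff _ _).1 hx]
          exact fun h => (List.nodup_cons.1 hnd).1 (h ▸ hD)
      have hnadj : ∀ x ∈ t.leaves, ∀ y ∈ tc.leaves, ¬ G.Adj x y := by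
        intro x hx y hy hadj
        rw [hc1] at hy
        exact hxcomp x hx ((SimpleGraph.ConnectedComponent.connectedComponentMk_eq_of_adj hadj).trans
          ((SimpleGraph.ConnectedComponent.mem_supp_iff _ _).1 hy))
      have hld : Disjoint t.leaves tc.leaves := by
        rw [Set.disjoint_left]
        intro x hx hx'
        rw [hc1] at hx'
        exact hxcomp x hx ((SimpleGraph.ConnectedComponent.mem_supp_iff _ _).1 hx')
      have hsubstar : Cstar.supp ⊆ t.leaves ∪ tc.leaves := by
        rw [h1]; exact fun x hx => Or.inl (Or.inl hx)
      refine ⟨.node false t tc, ?_, ⟨h2, hc2, hld, ?_⟩, ?_⟩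
      · show t.leaves ∪ tc.leaves = _
        rw [h1, hc1]
        ext x
        simp only [Set.mem_union, Set.mem_iUnion, List.mem_cons]
        constructor
        · rintro ((h | ⟨D, hD, h⟩) | h)
          · exact Or.inl h
          · exact Or.inr ⟨D, Or.inr hD, h⟩
          · exact Or.inr ⟨C, Or.inl rfl, h⟩
        · rintro (h | ⟨D, (rfl | hD), h⟩)
          · exact Or.inl (Or.inl h)
          · exact Or.inr h
          · exact Or.inl (Or.inr ⟨D, hD, h⟩)
      · intro x hx y hy
        simp [hnadj x hx y hy]
      · exact ⟨hkey _ hsubstar, h3, hc3⟩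
  -- assemble the full cotree
  have : Fintype G.ConnectedComponent := Fintype.ofFinite _
  obtain ⟨t, ht1, ht2, ht3⟩ := hbuild (Finset.univ.erase Cstar).toList
    (by simp) (Finset.nodup_toList _)
  have htuniv : t.leaves = Set.univ := by
    rw [ht1]
    apply Set.eq_univ_of_forall
    intro v
    rcases eq_or_ne (G.connectedComponentMk v) Cstar with h | h
    · exact Or.inl (h ▸ hmem v)
    · refine Or.inr (Set.mem_iUnion₂.2 ⟨G.connectedComponentMk v, ?_, hmem v⟩)
      rw [Finset.mem_toList, Finset.mem_erase]
      exact ⟨h, Finset.mem_univ _⟩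
  have hrecmin : IsRecMinColoring G σ' := ⟨t, ⟨ht2, htuniv⟩, ht3⟩
  have hrange : Set.range σ' = S := by
    rw [← Set.image_univ, himgS Set.univ (Set.subset_univ _)]
  have hchiG : ((S.ncard : ℕ∞)) = G.chromaticNumber := by
    have h1 := hkey Set.univ (Set.subset_univ _)
    unfold UsesChiColors at h1
    rw [himgS Set.univ (Set.subset_univ _)] at h1
    rw [h1]
    exact le_antisymm
      (SimpleGraph.chromaticNumber_mono_of_hom (G.induceUnivIso).toEmbedding.toHom)
      (SimpleGraph.chromaticNumber_mono_of_hom (G.induceUnivIso).symm.toEmbedding.toHom)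
  have hchiCstar : G.chromaticNumber = (G.induce Cstar.supp).chromaticNumber :=
    hchiG.symm.trans hSchi
  refine ⟨hrecmin, hrange, hchiG, le_antisymm ?_ ?_⟩
  · rw [hchiCstar]
    exact le_iSup (fun C : G.ConnectedComponent => (G.induce C.supp).chromaticNumber) Cstar
  · exact iSup_le fun C => (hmax C).trans hchiCstar.ge
end

section
/- Let G be a cograph, let σ be an hc-coloring of G with respect to every binary cotree of G, and let G1 and G2 be two connected components of G with equal chromatic number χ(G1) = χ(G2). Then the color sets used on the two components coincide: σ(V(G1)) = σ(V(G2)). -/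
/-! Basic notions: cographs, binary cotrees, hc-colorings, greedy colorings,
recursively minimal (color-minimal) colorings, and counting of hc-colorings. -/

variable {V : Type*}

section AuxProofs

variable {V : Type*}


lemma auxWalkCross {W : Type*} {H : SimpleGraph W} (P : W → Prop) {x y : W}
    (w : H.Walk x y) (hy : ¬ P y) : P x → ∃ p q, P p ∧ ¬ P q ∧ H.Adj p q := by
  induction w with
  | nil => exact fun hx => absurd hx hy
  | @cons a b c h w ih =>
    intro hx
    by_cases hb : P b
    · exact ih hy hb
    · exact ⟨a, b, hx, hb, h⟩

lemma auxFrontier {V : Type*} {G : SimpleGraph V} {S A : Set V}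
    {x y : V} (hx : x ∈ A) (hxS : x ∈ S) (hyS : y ∈ S) (hy : y ∉ A)
    (hreach : (G.induce S).Preconnected) :
    ∃ p q, p ∈ A ∧ q ∈ S ∧ q ∉ A ∧ G.Adj p q := by
  obtain ⟨w⟩ := hreach ⟨x, hxS⟩ ⟨y, hyS⟩
  obtain ⟨p, q, hp, hq, hadj⟩ := auxWalkCross (fun z : S => z.val ∈ A) w hy hx
  exact ⟨p, q, hp, q.2, hq, by simpa using hadj⟩

-- b = false case: A,B parts of S\{v}, no cross edges, derive contradiction from P4-freeness
lemma p4false {V : Type*} {G : SimpleGraph V} (hG : IsCograph G) {S A B : Set V} {v : V}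
    (HS : (G.induce S).Preconnected)
    (hvS : v ∈ S) (hdisj : Disjoint A B) (hcover : A ∪ B = S \ {v})
    (hcross : ∀ x ∈ A, ∀ y ∈ B, ¬ G.Adj x y)
    (hwB : ∃ w ∈ B, G.Adj v w)
    (hu : ∃ u ∈ A, ¬ G.Adj v u)
    (ha : ∃ a ∈ A, G.Adj v a) : False := by
  have hAS : A ⊆ S := fun a haA => (hcover ▸ Set.mem_union_left B haA).1
  have hBS : B ⊆ S := fun b hb => (hcover ▸ Set.mem_union_right A hb).1
  have hAv : ∀ a ∈ A, a ≠ v := fun a haA => (hcover ▸ Set.mem_union_left B haA).2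
  have hBv : ∀ b ∈ B, b ≠ v := fun b hb => (hcover ▸ Set.mem_union_right A hb).2
  have hAB : ∀ x ∈ A, ∀ y ∈ B, x ≠ y := fun x hx y hy h =>
    (Set.disjoint_left.mp hdisj hx) (h ▸ hy)
  obtain ⟨w, hwBmem, hvw⟩ := hwB
  obtain ⟨u, huA, hvu⟩ := hu
  -- M = non-neighbors of v in A, N = neighbors
  set M : Set V := {a ∈ A | ¬ G.Adj v a} with hM
  have key : ∃ a ∈ A, G.Adj v a ∧ ∃ m ∈ M, G.Adj a m := by
    by_contra hno
    push_neg at hno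
    have hwM : w ∉ M := fun hwm => hAB w hwm.1 w hwBmem rfl
    obtain ⟨p, q, hpM, hqS, hqM, hadj⟩ :=
      auxFrontier (A := M) ⟨huA, hvu⟩ (hAS huA) (hBS hwBmem) hwM HS
    have hqS' : q ∈ A ∪ B ∨ q = v := by
      by_cases h : q = v
      · exact Or.inr h
      · exact Or.inl (hcover ▸ ⟨hqS, h⟩)
    rcases hqS' with hq | rfl
    · rcases hq with hqA | hqB
      · have hqN : G.Adj v q := by
          by_contra hn; exact hqM ⟨hqA, hn⟩
        exact hno q hqA hqN p hpM hadj.symm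
      · exact hcross p hpM.1 q hqB hadj
    · exact hpM.2 hadj.symm
  obtain ⟨a, haA, hva, m, hmM, ham⟩ := key
  -- P4 : m - a - v - w
  exact hG ⟨m, a, v, w, ham.ne',
    hAv m hmM.1, hAB m hmM.1 w hwBmem, hAv a haA, hAB a haA w hwBmem,
    (hBv w hwBmem).symm, ham.symm, hva.symm, hvw, fun h => hmM.2 h.symm, hcross m hmM.1 w hwBmem,
    hcross a haA w hwBmem⟩

-- b = true case: all cross edges present
lemma p4true {V : Type*} {G : SimpleGraph V} (hG : IsCograph G) {S A B : Set V} {v : V}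
    (HSc : ((Gᶜ).induce S).Preconnected)
    (hvS : v ∈ S) (hdisj : Disjoint A B) (hcover : A ∪ B = S \ {v})
    (hcross : ∀ x ∈ A, ∀ y ∈ B, G.Adj x y)
    (hwB : ∃ w ∈ B, ¬ G.Adj v w)
    (hu : ∃ u ∈ A, G.Adj v u)
    (ha : ∃ a ∈ A, ¬ G.Adj v a) : False := by
  have hAS : A ⊆ S := fun a haA => (hcover ▸ Set.mem_union_left B haA).1
  have hBS : B ⊆ S := fun b hb => (hcover ▸ Set.mem_union_right A hb).1
  have hAv : ∀ a ∈ A, a ≠ v := fun a haA => (hcover ▸ Set.mem_union_left B haA).2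
  have hBv : ∀ b ∈ B, b ≠ v := fun b hb => (hcover ▸ Set.mem_union_right A hb).2
  have hAB : ∀ x ∈ A, ∀ y ∈ B, x ≠ y := fun x hx y hy h =>
    (Set.disjoint_left.mp hdisj hx) (h ▸ hy)
  obtain ⟨w, hwBmem, hvw⟩ := hwB
  obtain ⟨u, huA, hvu⟩ := hu
  set M : Set V := {a ∈ A | G.Adj v a} with hM
  have key : ∃ a ∈ A, ¬ G.Adj v a ∧ ∃ m ∈ M, (Gᶜ).Adj a m := by
    by_contra hno
    push_neg at hno
    have hwM : w ∉ M := fun hwm => hAB w hwm.1 w hwBmem rfl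
    obtain ⟨p, q, hpM, hqS, hqM, hadj⟩ :=
      auxFrontier (G := Gᶜ) (A := M) ⟨huA, hvu⟩ (hAS huA) (hBS hwBmem) hwM HSc
    rw [SimpleGraph.compl_adj] at hadj
    have hqS' : q ∈ A ∪ B ∨ q = v := by
      by_cases h : q = v
      · exact Or.inr h
      · exact Or.inl (hcover ▸ ⟨hqS, h⟩)
    rcases hqS' with hq | rfl
    · rcases hq with hqA | hqB
      · have hqN : ¬ G.Adj v q := fun hn => hqM ⟨hqA, hn⟩
        exact hno q hqA hqN p hpM ((SimpleGraph.compl_adj _ _ _).mpr ⟨hadj.1.symm, fun h => hadj.2 h.symm⟩)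
      · exact hadj.2 (hcross p hpM.1 q hqB)
    · exact hadj.2 hpM.2.symm
  obtain ⟨a, haA, hva, m, hmM, ham⟩ := key
  rw [SimpleGraph.compl_adj] at ham
  -- P4 : v - m - w - a
  exact hG ⟨v, m, w, a, (hAv m hmM.1).symm, (hBv w hwBmem).symm, (hAv a haA).symm,
    hAB m hmM.1 w hwBmem, ham.1.symm, (hAB a haA w hwBmem).symm,
    hmM.2, hcross m hmM.1 w hwBmem, (hcross a haA w hwBmem).symm,
    hvw, hva, fun h => ham.2 h.symm⟩


lemma split_of_not_preconnected {V : Type*} {G : SimpleGraph V} {S : Set V}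
    (h : ¬ (G.induce S).Preconnected) :
    ∃ A B : Set V, A.Nonempty ∧ B.Nonempty ∧ Disjoint A B ∧ A ∪ B = S ∧
      ∀ x ∈ A, ∀ y ∈ B, ¬ G.Adj x y := by
  rw [SimpleGraph.Preconnected] at h; push_neg at h
  obtain ⟨x, y, hxy⟩ := h
  set A : Set V := {a | ∃ h : a ∈ S, (G.induce S).Reachable x ⟨a, h⟩} with hAdef
  have hAS : A ⊆ S := fun a ha => ha.1
  refine ⟨A, S \ A, ⟨x.1, x.2, SimpleGraph.Reachable.refl x⟩,
    ⟨y.1, y.2, fun hyA => hxy hyA.2⟩, Set.disjoint_sdiff_right,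
    Set.union_diff_cancel hAS, ?_⟩
  intro p hp q hq hadj
  exact hq.2 ⟨hq.1, hp.2.trans (SimpleGraph.Adj.reachable (by simpa using hadj))⟩

open Classical in
lemma seinsche {V : Type*} [Fintype V] {G : SimpleGraph V} (hG : IsCograph G) :
    ∀ n : ℕ, ∀ S : Set V, S.ncard = n → 2 ≤ n →
    ∃ (A B : Set V) (b : Bool), A.Nonempty ∧ B.Nonempty ∧ Disjoint A B ∧ A ∪ B = S ∧
      ∀ x ∈ A, ∀ y ∈ B, (G.Adj x y ↔ b = true) := by
  intro n
  induction n using Nat.strong_induction_on with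
  | _ n ih =>
  intro S hn h2
  rcases Nat.lt_or_ge n 3 with h3 | h3
  · -- n = 2
    have hn2 : S.ncard = 2 := by omega
    obtain ⟨x, y, hxy, rfl⟩ := Set.ncard_eq_two.mp hn2
    refine ⟨{x}, {y}, if G.Adj x y then true else false, ⟨x, rfl⟩, ⟨y, rfl⟩,
      Set.disjoint_singleton.mpr hxy, rfl, ?_⟩
    rintro p rfl q rfl
    by_cases h : G.Adj p q <;> simp [h]
  · -- n ≥ 3
    have hSfin : S.Finite := Set.toFinite S
    have hSne : S.Nonempty := by
      rw [← Set.ncard_pos hSfin, hn]; omega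
    by_cases hP : (G.induce S).Preconnected
    · by_cases hPc : ((Gᶜ).induce S).Preconnected
      · exfalso
        obtain ⟨v, hvS⟩ := hSne
        set S' : Set V := S \ {v} with hS'def
        have hS'card : S'.ncard = n - 1 := by
          rw [hS'def, Set.ncard_diff_singleton_of_mem hvS, hn]
        obtain ⟨A, B, b, hAne, hBne, hdisj, hcover, hiff⟩ :=
          ih (n - 1) (by omega) S' hS'card (by omega)
        have hAS : A ⊆ S := fun a haA => (hcover ▸ Set.mem_union_left B haA).1
        have hBS : B ⊆ S := fun b' hb => (hcover ▸ Set.mem_union_right A hb).1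
        have hAv : ∀ a ∈ A, a ≠ v := fun a haA => (hcover ▸ Set.mem_union_left B haA).2
        have hBv : ∀ b' ∈ B, b' ≠ v := fun b' hb => (hcover ▸ Set.mem_union_right A hb).2
        obtain ⟨a0, ha0⟩ := hAne
        obtain ⟨w0, hw0⟩ := hBne
        have hw0A : w0 ∉ A := fun h => Set.disjoint_left.mp hdisj h hw0
        have ha0B : a0 ∉ B := fun h => Set.disjoint_left.mp hdisj ha0 h
        have hS'ne : S'.Nonempty := ⟨a0, hcover ▸ Set.mem_union_left B ha0⟩
        cases b with
        | false =>
          have hcrossF : ∀ x ∈ A, ∀ y ∈ B, ¬ G.Adj x y := by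
            intro x hx y hy h
            simpa using (hiff x hx y hy).mp h
          -- v has a G-neighbor in A
          have hNA : ∃ a ∈ A, G.Adj v a := by
            obtain ⟨p, q, hp, hqS, hqA, hadj⟩ := auxFrontier ha0 (hAS ha0) (hBS hw0) hw0A hP
            have : q = v := by
              by_contra hq
              have hqB : q ∈ B := ((hcover ▸ ⟨hqS, hq⟩ : q ∈ A ∪ B)).resolve_left hqA
              exact hcrossF p hp q hqB hadj
            exact ⟨p, hp, (this ▸ hadj).symm⟩
          have hNB : ∃ w ∈ B, G.Adj v w := by
            obtain ⟨p, q, hp, hqS, hqB, hadj⟩ := auxFrontier hw0 (hBS hw0) (hAS ha0) ha0B hP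
            have : q = v := by
              by_contra hq
              have hqA : q ∈ A := ((hcover ▸ ⟨hqS, hq⟩ : q ∈ A ∪ B)).resolve_right hqB
              exact hcrossF q hqA p hp hadj.symm
            exact ⟨p, hp, (this ▸ hadj).symm⟩
          have hex : ∃ u ∈ S', ¬ G.Adj v u := by
            by_contra hall
            push_neg at hall
            obtain ⟨z, hzS'⟩ := hS'ne
            obtain ⟨p, q, hp, hqS, hqv, hadj⟩ :=
              auxFrontier (G := Gᶜ) (A := {v}) rfl hvS hzS'.1 (by simpa using hzS'.2) hPc
            rw [Set.mem_singleton_iff] at hp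
            rw [hp, SimpleGraph.compl_adj] at hadj
            exact hadj.2 (hall q ⟨hqS, fun h => hqv (by simpa using h)⟩)
          obtain ⟨u, huS', hu⟩ := hex
          rcases (hcover ▸ huS' : u ∈ A ∪ B) with huA | huB
          · exact p4false hG hP hvS hdisj hcover hcrossF hNB ⟨u, huA, hu⟩ hNA
          · exact p4false hG hP hvS hdisj.symm (Set.union_comm A B ▸ hcover)
              (fun x hx y hy h => hcrossF y hy x hx h.symm) hNA ⟨u, huB, hu⟩ hNB
        | true =>
          have hcrossT : ∀ x ∈ A, ∀ y ∈ B, G.Adj x y := fun x hx y hy =>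
            (hiff x hx y hy).mpr rfl
          have hNA : ∃ a ∈ A, ¬ G.Adj v a := by
            obtain ⟨p, q, hp, hqS, hqA, hadj⟩ :=
              auxFrontier (G := Gᶜ) ha0 (hAS ha0) (hBS hw0) hw0A hPc
            rw [SimpleGraph.compl_adj] at hadj
            have : q = v := by
              by_contra hq
              have hqB : q ∈ B := ((hcover ▸ ⟨hqS, hq⟩ : q ∈ A ∪ B)).resolve_left hqA
              exact hadj.2 (hcrossT p hp q hqB)
            exact ⟨p, hp, fun h => hadj.2 (this ▸ h.symm)⟩
          have hNB : ∃ w ∈ B, ¬ G.Adj v w := by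
            obtain ⟨p, q, hp, hqS, hqB, hadj⟩ :=
              auxFrontier (G := Gᶜ) hw0 (hBS hw0) (hAS ha0) ha0B hPc
            rw [SimpleGraph.compl_adj] at hadj
            have : q = v := by
              by_contra hq
              have hqA : q ∈ A := ((hcover ▸ ⟨hqS, hq⟩ : q ∈ A ∪ B)).resolve_right hqB
              exact hadj.2 (hcrossT q hqA p hp).symm
            exact ⟨p, hp, fun h => hadj.2 (this ▸ h.symm)⟩
          have hex : ∃ u ∈ S', G.Adj v u := by
            by_contra hall
            push_neg at hall
            obtain ⟨z, hzS'⟩ := hS'ne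
            obtain ⟨p, q, hp, hqS, hqv, hadj⟩ :=
              auxFrontier (G := G) (A := {v}) rfl hvS hzS'.1 (by simpa using hzS'.2) hP
            rw [Set.mem_singleton_iff] at hp
            exact hall q ⟨hqS, fun h => hqv (by simpa using h)⟩ (hp ▸ hadj)
          obtain ⟨u, huS', hu⟩ := hex
          rcases (hcover ▸ huS' : u ∈ A ∪ B) with huA | huB
          · exact p4true hG hPc hvS hdisj hcover hcrossT hNB ⟨u, huA, hu⟩ hNA
          · exact p4true hG hPc hvS hdisj.symm (Set.union_comm A B ▸ hcover)
              (fun x hx y hy => (hcrossT y hy x hx).symm) hNA ⟨u, huB, hu⟩ hNB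
      · -- complement disconnected : join split
        obtain ⟨A, B, hA, hB, hd, hu, hcross⟩ := split_of_not_preconnected hPc
        refine ⟨A, B, true, hA, hB, hd, hu, ?_⟩
        intro x hx y hy
        simp only [iff_true]
        have hne : x ≠ y := fun h => Set.disjoint_left.mp hd hx (h ▸ hy)
        by_contra hnadj
        exact hcross x hx y hy (SimpleGraph.compl_adj _ _ _ |>.mpr ⟨hne, hnadj⟩)
    · obtain ⟨A, B, hA, hB, hd, hu, hcross⟩ := split_of_not_preconnected hP
      exact ⟨A, B, false, hA, hB, hd, hu, fun x hx y hy =>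
        ⟨fun h => absurd h (hcross x hx y hy), fun h => by simp at h⟩⟩


lemma exists_cotree [Fintype V] {G : SimpleGraph V} (hG : IsCograph G) (S : Set V)
    (hS : S.Nonempty) : ∃ T : Cotree V, T.Represents G ∧ T.leaves = S := by
  suffices h : ∀ n : ℕ, ∀ S : Set V, S.ncard = n → S.Nonempty →
      ∃ T : Cotree V, T.Represents G ∧ T.leaves = S from h S.ncard S rfl hS
  intro n
  induction n using Nat.strong_induction_on with
  | _ n ih =>
  intro S hn hSne
  rcases Nat.lt_or_ge n 2 with h2 | h2
  · have h1 : S.ncard = 1 := by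
      have := (Set.ncard_pos (Set.toFinite S)).mpr hSne
      omega
    obtain ⟨v, rfl⟩ := Set.ncard_eq_one.mp h1
    exact ⟨Cotree.leaf v, trivial, rfl⟩
  · obtain ⟨A, B, b, hA, hB, hd, hu, hcross⟩ := seinsche hG n S hn h2
    have hAS : A ⊆ S := hu ▸ Set.subset_union_left
    have hBS : B ⊆ S := hu ▸ Set.subset_union_right
    obtain ⟨b0, hb0⟩ := hB
    obtain ⟨a0, ha0⟩ := hA
    have hAlt : A.ncard < n := by
      rw [← hn]
      exact Set.ncard_lt_ncard ⟨hAS, fun h => Set.disjoint_left.mp hd (h (hBS hb0)) hb0⟩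
        (Set.toFinite S)
    have hBlt : B.ncard < n := by
      rw [← hn]
      exact Set.ncard_lt_ncard ⟨hBS, fun h => Set.disjoint_left.mp hd ha0 (h (hAS ha0))⟩
        (Set.toFinite S)
    obtain ⟨TA, hRA, hLA⟩ := ih A.ncard hAlt A rfl ⟨a0, ha0⟩
    obtain ⟨TB, hRB, hLB⟩ := ih B.ncard hBlt B rfl ⟨b0, hb0⟩
    refine ⟨Cotree.node b TA TB, ⟨hRA, hRB, ?_, ?_⟩, ?_⟩
    · rw [hLA, hLB]; exact hd
    · rw [hLA, hLB]; exact hcross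
    · show TA.leaves ∪ TB.leaves = S
      rw [hLA, hLB, hu]

lemma hc_min {α β : Type*} [Fintype V] {G : SimpleGraph V} (σ : V → α) :
    ∀ T : Cotree V, T.Represents G → IsHCWrt σ T →
    ∀ f : ↥T.leaves → β, (∀ x y : ↥T.leaves, G.Adj x y → f x ≠ f y) →
    (σ '' T.leaves).ncard ≤ (Set.range f).ncard := by
  intro T
  induction T with
  | leaf v =>
    intro _ _ f _
    have h1 : (σ '' Cotree.leaves (Cotree.leaf v)).ncard = 1 := by
      show (σ '' {v}).ncard = 1
      rw [Set.image_singleton, Set.ncard_singleton]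
    rw [h1]
    have : (Set.range f).Nonempty := ⟨f ⟨v, rfl⟩, Set.mem_range_self _⟩
    exact (Set.ncard_pos (Set.finite_range f)).mpr this
  | node b l r ihl ihr =>
    intro hrep hhc f hf
    obtain ⟨Rl, Rr, hdisj, hcr⟩ := hrep
    obtain ⟨Hl, Hr, Hjoin, Hunion⟩ := hhc
    set fl : ↥l.leaves → β := fun x => f ⟨x.1, Set.mem_union_left _ x.2⟩ with hflx
    set fr : ↥r.leaves → β := fun x => f ⟨x.1, Set.mem_union_right _ x.2⟩ with hfrx
    have hfl' : ∀ x y : ↥l.leaves, G.Adj x y → fl x ≠ fl y := fun x y h => hf _ _ h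
    have hfr' : ∀ x y : ↥r.leaves, G.Adj x y → fr x ≠ fr y := fun x y h => hf _ _ h
    have IHl := ihl Rl Hl fl hfl'
    have IHr := ihr Rr Hr fr hfr'
    have hsubl : Set.range fl ⊆ Set.range f := by rintro _ ⟨x, rfl⟩; exact ⟨_, rfl⟩
    have hsubr : Set.range fr ⊆ Set.range f := by rintro _ ⟨x, rfl⟩; exact ⟨_, rfl⟩
    have himg : σ '' Cotree.leaves (Cotree.node b l r) = σ '' l.leaves ∪ σ '' r.leaves := by
      show σ '' (l.leaves ∪ r.leaves) = _
      rw [Set.image_union]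
    cases b with
    | true =>
      have hσd : Disjoint (σ '' l.leaves) (σ '' r.leaves) := Hjoin rfl
      have hfd : Disjoint (Set.range fl) (Set.range fr) := by
        rw [Set.disjoint_left]
        rintro c ⟨x, rfl⟩ ⟨y, hy⟩
        exact hf ⟨x.1, Set.mem_union_left _ x.2⟩ ⟨y.1, Set.mem_union_right _ y.2⟩
          ((hcr x.1 x.2 y.1 y.2).mpr rfl) hy.symm
      calc (σ '' Cotree.leaves (Cotree.node true l r)).ncard
          = (σ '' l.leaves).ncard + (σ '' r.leaves).ncard := by
            rw [himg, Set.ncard_union_eq hσd ((Set.toFinite _).image _) ((Set.toFinite _).image _)]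
        _ ≤ (Set.range fl).ncard + (Set.range fr).ncard := Nat.add_le_add IHl IHr
        _ = (Set.range fl ∪ Set.range fr).ncard :=
            (Set.ncard_union_eq hfd (Set.finite_range _) (Set.finite_range _)).symm
        _ ≤ (Set.range f).ncard :=
            Set.ncard_le_ncard (Set.union_subset hsubl hsubr) (Set.finite_range f)
    | false =>
      rcases Hunion rfl with hc | hc
      · calc (σ '' Cotree.leaves (Cotree.node false l r)).ncard
            = (σ '' r.leaves).ncard := by rw [himg, Set.union_eq_self_of_subset_left hc]
          _ ≤ (Set.range fr).ncard := IHr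
          _ ≤ (Set.range f).ncard := Set.ncard_le_ncard hsubr (Set.finite_range f)
      · calc (σ '' Cotree.leaves (Cotree.node false l r)).ncard
            = (σ '' l.leaves).ncard := by rw [himg, Set.union_eq_self_of_subset_right hc]
          _ ≤ (Set.range fl).ncard := IHl
          _ ≤ (Set.range f).ncard := Set.ncard_le_ncard hsubl (Set.finite_range f)

end AuxProofs

/-- If `σ` is an hc-coloring of the cograph `G` with respect to
every binary cotree of `G`, then any two connected components of `G` with equal
chromatic number carry the same color set. -/
theorem hc_wrt_every_cotree_equal_component_colors {V α : Type*} [Fintype V]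
    [Nonempty V] (G : SimpleGraph V) (hG : IsCograph G)
    (σ : V → α) (hproper : ∀ x y, G.Adj x y → σ x ≠ σ y)
    (hhc : ∀ T : Cotree V, Cotree.IsCotreeOf T G → IsHCWrt σ T)
    (C1 C2 : G.ConnectedComponent)
    (hchi : (G.induce C1.supp).chromaticNumber = (G.induce C2.supp).chromaticNumber) :
    σ '' C1.supp = σ '' C2.supp := by
  classical
  by_cases hC : C1 = C2
  · rw [hC]
  -- basic component facts
  have hsupp : ∀ C : G.ConnectedComponent, C.supp.Nonempty := by
    intro C
    obtain ⟨v, hv⟩ := C.exists_rep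
    exact ⟨v, hv⟩
  have hdisj12 : Disjoint C1.supp C2.supp := by
    rw [Set.disjoint_left]
    intro x h1 h2
    exact hC (h1.symm.trans h2)
  have hnoedge : ∀ x y, G.Adj x y →
      G.connectedComponentMk x = G.connectedComponentMk y := fun x y h =>
    SimpleGraph.ConnectedComponent.sound h.reachable
  obtain ⟨T1, hR1, hL1⟩ := exists_cotree hG C1.supp (hsupp C1)
  obtain ⟨T2, hR2, hL2⟩ := exists_cotree hG C2.supp (hsupp C2)
  have cross12 : ∀ x ∈ C1.supp, ∀ y ∈ C2.supp, (G.Adj x y ↔ false = true) := by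
    intro x hx y hy
    constructor
    · intro h
      exact absurd (hx.symm.trans ((hnoedge x y h).trans hy)) hC
    · intro h
      simp at h
  have rep12 : (Cotree.node false T1 T2).Represents G := by
    refine ⟨hR1, hR2, ?_, ?_⟩
    · rw [hL1, hL2]; exact hdisj12
    · rw [hL1, hL2]; exact cross12
  -- obtain the hc data for T1, T2 by building a cotree of all of G
  have hhc12 : IsHCWrt σ (Cotree.node false T1 T2) := by
    rcases Set.eq_empty_or_nonempty ((C1.supp ∪ C2.supp)ᶜ) with hRe | hRne
    · have huniv : (Cotree.node false T1 T2).leaves = Set.univ := by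
        show T1.leaves ∪ T2.leaves = Set.univ
        rw [hL1, hL2]
        exact Set.compl_empty_iff.mp hRe
      exact hhc _ ⟨rep12, huniv⟩
    · obtain ⟨TR, hRR, hLR⟩ := exists_cotree hG _ hRne
      have crossR : ∀ x ∈ (Cotree.node false T1 T2).leaves, ∀ y ∈ TR.leaves,
          (G.Adj x y ↔ false = true) := by
        intro x hx y hy
        rw [hLR] at hy
        constructor
        · intro h
          exfalso
          apply hy
          have hx' : x ∈ C1.supp ∪ C2.supp := by
            rw [← hL1, ← hL2]; exact hx
          rcases hx' with h1 | h1
          · exact Or.inl ((hnoedge x y h).symm.trans h1)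
          · exact Or.inr ((hnoedge x y h).symm.trans h1)
        · intro h
          simp at h
      have repT : (Cotree.node false (Cotree.node false T1 T2) TR).Represents G := by
        refine ⟨rep12, hRR, ?_, crossR⟩
        rw [hLR]
        have h12 : (Cotree.node false T1 T2).leaves = C1.supp ∪ C2.supp := by
          show T1.leaves ∪ T2.leaves = _
          rw [hL1, hL2]
        rw [h12]
        exact disjoint_compl_right
      have hLT : (Cotree.node false (Cotree.node false T1 T2) TR).leaves = Set.univ := by
        show (T1.leaves ∪ T2.leaves) ∪ TR.leaves = Set.univ
        rw [hL1, hL2, hLR, Set.union_compl_self]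
      exact (hhc _ ⟨repT, hLT⟩).1
  obtain ⟨H1, H2, -, Hun⟩ := hhc12
  have hcontain : σ '' C1.supp ⊆ σ '' C2.supp ∨ σ '' C2.supp ⊆ σ '' C1.supp := by
    have := Hun rfl
    rw [hL1, hL2] at this
    exact this
  -- lower bound: χ(C) ≤ |σ''C.supp|
  have hlow : ∀ C : G.ConnectedComponent,
      (G.induce C.supp).chromaticNumber ≤ ((σ '' C.supp).ncard : ℕ∞) := by
    intro C
    have fin : (σ '' C.supp).Finite := (Set.toFinite _).image _
    haveI : Fintype ↥(σ '' C.supp) := fin.fintype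
    have col : (G.induce C.supp).Coloring ↥(σ '' C.supp) :=
      SimpleGraph.Coloring.mk (fun v => ⟨σ v.1, Set.mem_image_of_mem σ v.2⟩)
        (fun {x y} hadj h => hproper x.1 y.1 (by simpa using hadj) (congrArg Subtype.val h))
    have hcard : Fintype.card ↥(σ '' C.supp) = (σ '' C.supp).ncard := by
      rw [← Nat.card_coe_set_eq, Nat.card_eq_fintype_card]
    have := SimpleGraph.chromaticNumber_le_iff_colorable.mpr col.colorable
    rw [hcard] at this
    exact this
  -- each χ is finite
  have hfin : ∀ C : G.ConnectedComponent, ∃ n : ℕ,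
      (G.induce C.supp).chromaticNumber = (n : ℕ∞) := by
    intro C
    haveI : Fintype ↥(C.supp) := Fintype.ofFinite _
    have hle := SimpleGraph.chromaticNumber_le_iff_colorable.mpr
      ((G.induce C.supp).colorable_of_fintype)
    have : (G.induce C.supp).chromaticNumber ≠ ⊤ :=
      ne_top_of_le_ne_top (WithTop.coe_ne_top) hle
    obtain ⟨n, hn⟩ := WithTop.ne_top_iff_exists.mp this
    exact ⟨n, hn.symm⟩
  -- upper bound: |σ''C.supp| ≤ n for the component with cotree data
  have hup : ∀ (C : G.ConnectedComponent) (T : Cotree V), T.Represents G →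
      T.leaves = C.supp → IsHCWrt σ T → ∀ n : ℕ,
      (G.induce C.supp).chromaticNumber = (n : ℕ∞) → (σ '' C.supp).ncard ≤ n := by
    intro C T hRT hLT hHT n hn
    obtain ⟨col⟩ := SimpleGraph.chromaticNumber_le_iff_colorable.mp (le_of_eq hn)
    set f : ↥T.leaves → Fin n := fun x => col ⟨x.1, hLT ▸ x.2⟩ with hfdef
    have hfproper : ∀ x y : ↥T.leaves, G.Adj x y → f x ≠ f y := by
      intro x y h
      exact col.valid (by simpa using h)
    have hmin := hc_min σ T hRT hHT f hfproper
    rw [← hLT]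
    calc (σ '' T.leaves).ncard ≤ (Set.range f).ncard := hmin
      _ ≤ (Set.univ : Set (Fin n)).ncard :=
          Set.ncard_le_ncard (Set.subset_univ _) (Set.toFinite _)
      _ = n := by rw [Set.ncard_univ, Nat.card_eq_fintype_card, Fintype.card_fin]
  obtain ⟨n1, hn1⟩ := hfin C1
  obtain ⟨n2, hn2⟩ := hfin C2
  have hn12 : n1 = n2 := by
    have := hn1.symm.trans (hchi.trans hn2)
    exact_mod_cast this
  have hlow1 : n1 ≤ (σ '' C1.supp).ncard := by
    have := hlow C1
    rw [hn1] at this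
    exact_mod_cast this
  have hlow2 : n2 ≤ (σ '' C2.supp).ncard := by
    have := hlow C2
    rw [hn2] at this
    exact_mod_cast this
  have hup1 := hup C1 T1 hR1 hL1 H1 n1 hn1
  have hup2 := hup C2 T2 hR2 hL2 H2 n2 hn2
  rcases hcontain with hsub | hsub
  · exact Set.eq_of_subset_of_ncard_le hsub (by omega) ((Set.toFinite _).image _)
  · exact (Set.eq_of_subset_of_ncard_le hsub (by omega) ((Set.toFinite _).image _)).symm
end
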